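/- arXiv:1801.07513 — 9 statements merged into one kernel-verified Lean document; each statement's English description precedes it below -/
import Mathlib

section
/- Let α = 3.5, β > 2, a > 0, Υ ≥ 0 and λ_MT > 0. Define f(λ) = 1 − (1 + λ_MT/(α·λ))^(−α) and h(λ) = 1 − exp(−a·λ·(1 + Υ·f(λ))) for λ > 0. Then: (i) 0 ≤ h(λ) ≤ 1 for every λ > 0; (ii) h(λ) → 0 as λ → 0⁺; (iii) h(λ) → 1 as λ → +∞; (iv) h'(λ) ≥ 0 for every λ > 0; (v) h''(λ) ≤ 0 for every λ > 0, i.e. h is concave on (0, ∞). -/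
open Real Filter Set Topology

private lemma div_rpow_neg {x y p : ℝ} (hx : 0 < x) (hy : 0 < y) :
    (x / y) ^ (-p) = x ^ (-p) * y ^ p := by
  rw [Real.div_rpow hx.le hy.le, Real.rpow_neg hy.le]
  field_simp

private lemma hasDerivAt_rpow_mul {p q c l : ℝ} (hl : 0 < l) (hc : 0 < c) :
    HasDerivAt (fun x : ℝ => x ^ p * (x + c) ^ q)
      (p * l ^ (p-1) * (l+c) ^ q + l ^ p * (q * (l+c) ^ (q-1))) l := by
  have hlc : (0:ℝ) < l + c := by linarith
  have h1 : HasDerivAt (fun x : ℝ => x ^ p) (p * l ^ (p-1)) l :=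
    Real.hasDerivAt_rpow_const (Or.inl hl.ne')
  have h2 : HasDerivAt (fun x : ℝ => (x + c) ^ q) (q * (l+c) ^ (q-1)) l := by
    have := (((hasDerivAt_id l).add_const c).rpow_const (p := q) (Or.inl hlc.ne'))
    simpa using this
  exact h1.mul h2

private lemma psi_deriv_le_one {α l c : ℝ} (hα1 : 1 ≤ α) (hl : 0 < l) (hc : 0 < c) :
    (α+1)*(l ^ α * (l+c) ^ (-α)) + (-α)*(l ^ (α+1) * (l+c) ^ (-α-1)) ≤ 1 := by
  have hlc : (0:ℝ) < l + c := by linarith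
  set s : ℝ := (l + c) / l with hs
  have hs0 : 0 < s := by positivity
  have hs1 : 1 ≤ s := by
    rw [hs, le_div_iff₀ hl]; linarith
  have hbern : 1 + (α+1) * (s - 1) ≤ s ^ (α+1) := by
    have := one_add_mul_self_le_rpow_one_add (s := s - 1) (by linarith) (p := α+1) (by linarith)
    simpa using this
  have hkey : (α+1) * s ^ (-α) + (-α) * s ^ (-α-1) ≤ 1 := by
    have hpos : (0:ℝ) < s ^ (-α-1) := Real.rpow_pos_of_pos hs0 _
    have hmul : s ^ (-α-1) * (1 + (α+1) * (s-1)) ≤ s ^ (-α-1) * s ^ (α+1) :=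
      mul_le_mul_of_nonneg_left hbern hpos.le
    have e1 : s ^ (-α-1) * s ^ (α+1) = 1 := by
      rw [← Real.rpow_add hs0]; norm_num
    have e2 : s ^ (-α-1) * s = s ^ (-α) := by
      rw [← Real.rpow_add_one hs0.ne']; norm_num
    calc (α+1) * s ^ (-α) + (-α) * s ^ (-α-1)
        = s ^ (-α-1) * (1 + (α+1) * (s-1)) := by rw [← e2]; ring
      _ ≤ s ^ (-α-1) * s ^ (α+1) := hmul
      _ = 1 := e1
  have hA : s ^ (-α) = (l+c) ^ (-α) * l ^ α := div_rpow_neg hlc hl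
  have hB : s ^ (-α-1) = (l+c) ^ (-α-1) * l ^ (α+1) := by
    rw [show (-α-1 : ℝ) = -(α+1) by ring, div_rpow_neg hlc hl,
      show (-(α+1) : ℝ) = -α-1 by ring]
  calc (α+1)*(l ^ α * (l+c) ^ (-α)) + (-α)*(l ^ (α+1) * (l+c) ^ (-α-1))
      = (α+1) * s ^ (-α) + (-α) * s ^ (-α-1) := by rw [hA, hB]; ring
    _ ≤ 1 := hkey

private lemma hasDerivAt_G {α a Υ c : ℝ} {l : ℝ} (hl : 0 < l) (hc : 0 < c) :
    HasDerivAt (fun x : ℝ => a*(1+Υ)*x - a*Υ*(x ^ (α+1) * (x+c) ^ (-α)))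
      (a*(1+Υ) - a*Υ*((α+1)*(l ^ α * (l+c) ^ (-α)) + (-α)*(l ^ (α+1) * (l+c) ^ (-α-1)))) l := by
  have h1 : HasDerivAt (fun x : ℝ => a*(1+Υ)*x) (a*(1+Υ)) l := by
    simpa using (hasDerivAt_id l).const_mul (a*(1+Υ))
  have h2 := hasDerivAt_rpow_mul (p := α+1) (q := -α) hl hc
  rw [show α+1-1 = α by ring] at h2
  have := h1.sub (h2.const_mul (a*Υ))
  exact this.congr_deriv (by ring)

private lemma hasDerivAt_D1 {α a Υ c : ℝ} {l : ℝ} (hl : 0 < l) (hc : 0 < c) :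
    HasDerivAt (fun x : ℝ =>
        a*(1+Υ) - a*Υ*((α+1)*(x ^ α * (x+c) ^ (-α)) + (-α)*(x ^ (α+1) * (x+c) ^ (-α-1))))
      (-(a*Υ*((α+1)*(α * l ^ (α-1) * (l+c) ^ (-α) + l ^ α * ((-α) * (l+c) ^ (-α-1)))
          + (-α)*((α+1) * l ^ α * (l+c) ^ (-α-1) + l ^ (α+1) * ((-α-1) * (l+c) ^ (-α-2)))))) l := by
  have h1 := hasDerivAt_rpow_mul (p := α) (q := -α) hl hc
  have h2 := hasDerivAt_rpow_mul (p := α+1) (q := -α-1) hl hc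
  rw [show α+1-1 = α by ring, show -α-1-1 = -α-2 by ring] at h2
  exact (((h1.const_mul (α+1)).add (h2.const_mul (-α))).const_mul (a*Υ)).const_sub (a*(1+Υ))

private lemma D2_nonpos {α a Υ c : ℝ} {l : ℝ} (hα1 : 1 ≤ α) (hl : 0 < l) (hc : 0 < c)
    (ha : 0 ≤ a) (hΥ : 0 ≤ Υ) :
    (-(a*Υ*((α+1)*(α * l ^ (α-1) * (l+c) ^ (-α) + l ^ α * ((-α) * (l+c) ^ (-α-1)))
          + (-α)*((α+1) * l ^ α * (l+c) ^ (-α-1) + l ^ (α+1) * ((-α-1) * (l+c) ^ (-α-2)))))) ≤ 0 := by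
  have hlc : (0:ℝ) < l + c := by linarith
  have e1 : l ^ α = l ^ (α-1) * l := by
    rw [← Real.rpow_add_one hl.ne']; ring_nf
  have e2 : l ^ (α+1) = l ^ (α-1) * l * l := by
    rw [Real.rpow_add_one hl.ne' α, e1]
  have e3 : (l+c) ^ (-α) = (l+c) ^ (-α-2) * (l+c) * (l+c) := by
    rw [← Real.rpow_add_one hlc.ne', ← Real.rpow_add_one hlc.ne']; ring_nf
  have e4 : (l+c) ^ (-α-1) = (l+c) ^ (-α-2) * (l+c) := by
    rw [← Real.rpow_add_one hlc.ne']; ring_nf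
  have key : (α+1)*(α * l ^ (α-1) * (l+c) ^ (-α) + l ^ α * ((-α) * (l+c) ^ (-α-1)))
      + (-α)*((α+1) * l ^ α * (l+c) ^ (-α-1) + l ^ (α+1) * ((-α-1) * (l+c) ^ (-α-2)))
      = α*(α+1)*(l ^ (α-1) * (l+c) ^ (-α-2))*c^2 := by
    rw [e2, e1, e3, e4]; ring
  rw [key]
  have h1 : 0 < l ^ (α-1) := Real.rpow_pos_of_pos hl _
  have h2 : 0 < (l+c) ^ (-α-2) := Real.rpow_pos_of_pos hlc _
  have : 0 ≤ a*Υ*(α*(α+1)*(l ^ (α-1) * (l+c) ^ (-α-2))*c^2) := by positivity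
  linarith

/-- Lemma 4 of the paper: properties of the cell-detection factor
`h(λ) = 1 − exp(−a·λ·(1 + Υ·f(λ)))` as a function of the base-station density
`λ > 0`, where `f(λ) = 1 − (1 + λ_MT/(α·λ))^(−α)`, `α = 3.5`, `a > 0`, `Υ ≥ 0`. -/
theorem detection_factor_density_properties (α β a Υ lMT : ℝ)
    (hα : α = 3.5) (hβ : 2 < β) (ha : 0 < a) (hΥ : 0 ≤ Υ) (hMT : 0 < lMT)
    (f h : ℝ → ℝ)
    (hf : ∀ l : ℝ, f l = 1 - (1 + lMT / (α * l)) ^ (-α))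
    (hh : ∀ l : ℝ, h l = 1 - Real.exp (-(a * l * (1 + Υ * f l)))) :
    (∀ l : ℝ, 0 < l → 0 ≤ h l ∧ h l ≤ 1) ∧
    Tendsto h (nhdsWithin 0 (Ioi 0)) (nhds 0) ∧
    Tendsto h atTop (nhds 1) ∧
    (∀ l : ℝ, 0 < l → 0 ≤ deriv h l) ∧
    (∀ l : ℝ, 0 < l → deriv (deriv h) l ≤ 0) ∧
    ConcaveOn ℝ (Ioi 0) h := by
  have hα1 : (1:ℝ) ≤ α := by rw [hα]; norm_num
  have hα0 : (0:ℝ) < α := by linarith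
  set c : ℝ := lMT / α with hcdef
  have hc : 0 < c := div_pos hMT hα0
  -- bounds on f
  have hf01 : ∀ l : ℝ, 0 < l → 0 ≤ f l ∧ f l ≤ 1 := by
    intro l hl
    rw [hf l]
    have hq : 0 < lMT / (α * l) := by positivity
    constructor
    · have := Real.rpow_le_one_of_one_le_of_nonpos (by linarith : (1:ℝ) ≤ 1 + lMT / (α * l))
        (by linarith : -α ≤ 0)
      linarith
    · have : 0 < (1 + lMT / (α * l)) ^ (-α) := Real.rpow_pos_of_pos (by linarith) _
      linarith
  have hgnonneg : ∀ l : ℝ, 0 < l → 0 ≤ a * l * (1 + Υ * f l) := by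
    intro l hl
    have h1 := (hf01 l hl).1
    have h2 : 0 ≤ Υ * f l := mul_nonneg hΥ h1
    have : 0 ≤ a * l := by positivity
    nlinarith
  -- f rewritten for positive l
  have hf' : ∀ l : ℝ, 0 < l → f l = 1 - (l+c) ^ (-α) * l ^ α := by
    intro l hl
    have hlc : (0:ℝ) < l + c := by linarith
    have h1 : 1 + lMT / (α * l) = (l + c) / l := by
      rw [hcdef]; field_simp
    rw [hf l, h1, div_rpow_neg hlc hl]
  -- h rewritten via G for positive l
  have hGeq : ∀ l : ℝ, 0 < l →
      a * l * (1 + Υ * f l) = a*(1+Υ)*l - a*Υ*(l ^ (α+1) * (l+c) ^ (-α)) := by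
    intro l hl
    rw [hf' l hl, Real.rpow_add_one hl.ne' α]
    ring
  have hhG : ∀ l : ℝ, 0 < l →
      h l = 1 - Real.exp (-(a*(1+Υ)*l - a*Υ*(l ^ (α+1) * (l+c) ^ (-α)))) := by
    intro l hl; rw [hh l, hGeq l hl]
  -- Part (i)
  have part1 : ∀ l : ℝ, 0 < l → 0 ≤ h l ∧ h l ≤ 1 := by
    intro l hl
    rw [hh l]
    constructor
    · have : Real.exp (-(a * l * (1 + Υ * f l))) ≤ 1 := by
        rw [Real.exp_le_one_iff]
        linarith [hgnonneg l hl]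
      linarith
    · have : 0 < Real.exp (-(a * l * (1 + Υ * f l))) := Real.exp_pos _
      linarith
  -- Part (ii)
  have hg0 : Tendsto (fun l => a * l * (1 + Υ * f l)) (nhdsWithin 0 (Ioi 0)) (nhds 0) := by
    apply squeeze_zero' (eventually_nhdsWithin_of_forall fun l hl => hgnonneg l hl)
      (g := fun l => a * (1+Υ) * l)
    · apply eventually_nhdsWithin_of_forall
      intro l hl
      have hl' : (0:ℝ) < l := hl
      have h2 := (hf01 l hl').2
      have h3 : Υ * f l ≤ Υ := by nlinarith
      have hal : 0 ≤ a * l := by positivity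
      have : a * l * (1 + Υ * f l) ≤ a * l * (1 + Υ) :=
        mul_le_mul_of_nonneg_left (by linarith) hal
      nlinarith
    · have : Tendsto (fun l : ℝ => a * (1+Υ) * l) (nhds 0) (nhds (a * (1+Υ) * 0)) :=
        (continuous_const.mul continuous_id).tendsto 0
      rw [mul_zero] at this
      exact this.mono_left nhdsWithin_le_nhds
  have part2 : Tendsto h (nhdsWithin 0 (Ioi 0)) (nhds 0) := by
    have : Tendsto (fun l => 1 - Real.exp (-(a * l * (1 + Υ * f l))))
        (nhdsWithin 0 (Ioi 0)) (nhds (1 - Real.exp (-0))) :=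
      tendsto_const_nhds.sub ((Real.continuous_exp.tendsto _).comp hg0.neg)
    norm_num at this
    exact this.congr fun l => (hh l).symm
  -- Part (iii)
  have part3 : Tendsto h atTop (nhds 1) := by
    have hat : Tendsto (fun l => a * l * (1 + Υ * f l)) atTop atTop := by
      have hbase : Tendsto (fun l : ℝ => a * l) atTop atTop :=
        Tendsto.const_mul_atTop ha tendsto_id
      refine tendsto_atTop_mono' atTop ?_ hbase
      filter_upwards [eventually_gt_atTop (0:ℝ)] with l hl
      have h1 := (hf01 l hl).1
      have : 0 ≤ a * l := by positivity
      nlinarith [mul_nonneg hΥ h1]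
    have hexp : Tendsto (fun l => Real.exp (-(a * l * (1 + Υ * f l)))) atTop (nhds 0) :=
      Real.tendsto_exp_atBot.comp (tendsto_neg_atTop_atBot.comp hat)
    have : Tendsto (fun l => 1 - Real.exp (-(a * l * (1 + Υ * f l)))) atTop (nhds (1 - 0)) :=
      tendsto_const_nhds.sub hexp
    norm_num at this
    exact this.congr fun l => (hh l).symm
  -- first derivative of h
  have hd1 : ∀ l : ℝ, 0 < l → HasDerivAt h
      ((a*(1+Υ) - a*Υ*((α+1)*(l ^ α * (l+c) ^ (-α)) + (-α)*(l ^ (α+1) * (l+c) ^ (-α-1)))) *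
        Real.exp (-(a*(1+Υ)*l - a*Υ*(l ^ (α+1) * (l+c) ^ (-α))))) l := by
    intro l hl
    have hG := hasDerivAt_G (α := α) (a := a) (Υ := Υ) hl hc
    have hst := (hG.neg.exp).const_sub 1
    have hst' : HasDerivAt (fun x : ℝ => 1 - Real.exp (-(a*(1+Υ)*x - a*Υ*(x ^ (α+1) * (x+c) ^ (-α)))))
        ((a*(1+Υ) - a*Υ*((α+1)*(l ^ α * (l+c) ^ (-α)) + (-α)*(l ^ (α+1) * (l+c) ^ (-α-1)))) *
          Real.exp (-(a*(1+Υ)*l - a*Υ*(l ^ (α+1) * (l+c) ^ (-α))))) l := by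
      exact hst.congr_deriv (by simp only [Pi.neg_apply]; ring)
    apply hst'.congr_of_eventuallyEq
    filter_upwards [isOpen_Ioi.mem_nhds hl] with x hx
    exact hhG x hx
  -- positivity of D1
  have hD1pos : ∀ l : ℝ, 0 < l →
      0 < a*(1+Υ) - a*Υ*((α+1)*(l ^ α * (l+c) ^ (-α)) + (-α)*(l ^ (α+1) * (l+c) ^ (-α-1))) := by
    intro l hl
    have hE := psi_deriv_le_one hα1 hl hc
    have haΥ : 0 ≤ a * Υ := mul_nonneg ha.le hΥ
    nlinarith
  -- Part (iv)
  have part4 : ∀ l : ℝ, 0 < l → 0 ≤ deriv h l := by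
    intro l hl
    rw [(hd1 l hl).deriv]
    exact mul_nonneg (hD1pos l hl).le (Real.exp_pos _).le
  -- second derivative of h
  have hd2 : ∀ l : ℝ, 0 < l → HasDerivAt (deriv h)
      ((-(a*Υ*((α+1)*(α * l ^ (α-1) * (l+c) ^ (-α) + l ^ α * ((-α) * (l+c) ^ (-α-1)))
          + (-α)*((α+1) * l ^ α * (l+c) ^ (-α-1) + l ^ (α+1) * ((-α-1) * (l+c) ^ (-α-2)))))) *
        Real.exp (-(a*(1+Υ)*l - a*Υ*(l ^ (α+1) * (l+c) ^ (-α)))) +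
        (a*(1+Υ) - a*Υ*((α+1)*(l ^ α * (l+c) ^ (-α)) + (-α)*(l ^ (α+1) * (l+c) ^ (-α-1)))) *
        (Real.exp (-(a*(1+Υ)*l - a*Υ*(l ^ (α+1) * (l+c) ^ (-α)))) *
          (-(a*(1+Υ) - a*Υ*((α+1)*(l ^ α * (l+c) ^ (-α)) + (-α)*(l ^ (α+1) * (l+c) ^ (-α-1))))))) l := by
    intro l hl
    have hG := hasDerivAt_G (α := α) (a := a) (Υ := Υ) hl hc
    have hD1 := hasDerivAt_D1 (α := α) (a := a) (Υ := Υ) hl hc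
    have hH := hD1.mul hG.neg.exp
    apply hH.congr_of_eventuallyEq
    filter_upwards [isOpen_Ioi.mem_nhds hl] with x hx
    exact (hd1 x hx).deriv
  -- Part (v)
  have part5 : ∀ l : ℝ, 0 < l → deriv (deriv h) l ≤ 0 := by
    intro l hl
    rw [(hd2 l hl).deriv]
    have e0 : 0 < Real.exp (-(a*(1+Υ)*l - a*Υ*(l ^ (α+1) * (l+c) ^ (-α)))) := Real.exp_pos _
    have hT := D2_nonpos (α := α) (a := a) (Υ := Υ) hα1 hl hc ha.le hΥ
    have hD := hD1pos l hl
    linarith [mul_nonneg (neg_nonneg.2 hT) e0.le,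
      mul_nonneg (mul_nonneg hD.le e0.le) hD.le]
  -- Part (vi)
  have part6 : ConcaveOn ℝ (Ioi 0) h := by
    apply concaveOn_of_deriv2_nonpos (convex_Ioi 0)
    · intro x hx
      exact ((hd1 x hx).differentiableAt.continuousAt).continuousWithinAt
    · rw [interior_Ioi]
      exact fun x hx => (hd1 x hx).differentiableAt.differentiableWithinAt
    · rw [interior_Ioi]
      exact fun x hx => (hd2 x hx).differentiableAt.differentiableWithinAt
    · rw [interior_Ioi]
      intro x hx
      have : deriv^[2] h x = deriv (deriv h) x := by
        simp [Function.iterate_succ, Function.iterate_zero]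
      rw [this]
      exact part5 x hx
  exact ⟨part1, part2, part3, part4, part5, part6⟩
end

section
/- Let EE(P, λ) be the closed-form energy efficiency defined below, with constants α = 3.5, β > 2, η > 0, Υ ≥ 0, λ_MT > 0, A > 0 and P_c ≥ P_i > 0, for either Load Model 1 or Load Model 2. Then: (i) for every fixed λ > 0, EE(P, λ) → 0 as P → 0⁺ and as P → +∞; (ii) for every fixed P > 0, EE(P, λ) → 0 as λ → 0⁺ and as λ → +∞. -/
open Real Filter Set Topology

lemma aux_L_facts (α t : ℝ) (hα : 0 < α) (ht : 0 < t) :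
    0 < 1 - (1 + t / α) ^ (-α) ∧ 1 - (1 + t / α) ^ (-α) < 1 ∧ 1 - (1 + t / α) ^ (-α) ≤ t := by
  have hb : (1:ℝ) < 1 + t / α := by have := div_pos ht hα; linarith
  have hb0 : (0:ℝ) < 1 + t / α := by linarith
  have hp : 0 < (1 + t / α) ^ (-α) := Real.rpow_pos_of_pos hb0 _
  have hlt1 : (1 + t / α) ^ (-α) < 1 :=
    Real.rpow_lt_one_of_one_lt_of_neg hb (by linarith)
  refine ⟨by linarith, by linarith, ?_⟩
  rcases le_or_gt 1 t with h1 | h1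
  · linarith
  · have hle : (1 + t / α) ^ α ≤ Real.exp t := by
      rw [Real.rpow_def_of_pos hb0]
      apply Real.exp_le_exp.mpr
      have hlog : Real.log (1 + t / α) ≤ t / α := by
        have := Real.log_le_sub_one_of_pos hb0
        linarith
      calc Real.log (1 + t / α) * α ≤ (t / α) * α :=
            mul_le_mul_of_nonneg_right hlog hα.le
        _ = t := div_mul_cancel₀ t hα.ne'
    have hrp : 0 < (1 + t / α) ^ α := Real.rpow_pos_of_pos hb0 α
    have h2 : (Real.exp t)⁻¹ ≤ ((1 + t / α) ^ α)⁻¹ := by gcongr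
    have h3 : 1 - t ≤ (Real.exp t)⁻¹ := by
      rw [← Real.exp_neg]
      linarith [Real.add_one_le_exp (-t)]
    rw [Real.rpow_neg hb0.le]
    linarith

/-- Lemma 5 of the paper: the closed-form energy efficiency `EE(P, λ)` vanishes
as the transmit power `P` tends to `0⁺` or `+∞` (for fixed density `λ > 0`), and
as the base-station density `λ` tends to `0⁺` or `+∞` (for fixed power `P > 0`),
for either Load Model 1 (`Mf = 0`) or Load Model 2 (`Mf = M`). -/
theorem energy_efficiency_vanishing_limits (α β η Υ lMT A Pc Pi : ℝ)
    (hα : α = 3.5) (hβ : 2 < β) (hη : 0 < η) (hΥ : 0 ≤ Υ) (hMT : 0 < lMT)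
    (hA : 0 < A) (hPi : 0 < Pi) (hPcPi : Pi ≤ Pc)
    (L M Mf : ℝ → ℝ)
    (hL : ∀ t : ℝ, L t = 1 - (1 + t / α) ^ (-α))
    (hM : ∀ t : ℝ, M t = t - L t)
    (hMf : Mf = (fun _ => 0) ∨ Mf = M)
    (Q : ℝ → ℝ → ℝ)
    (hQ : ∀ l P : ℝ, Q l P =
      1 - Real.exp (-(Real.pi * l * (P / η) ^ (2 / β) * (1 + Υ * L (lMT / l)))))
    (EE : ℝ → ℝ → ℝ)
    (hEE : ∀ P l : ℝ, EE P l = A * L (lMT / l) * Q l P /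
      ((1 + Υ * L (lMT / l)) *
        (L (lMT / l) * (P + Pc - Pi) + Pi + Mf (lMT / l) * Pc))) :
    (∀ l : ℝ, 0 < l →
      Tendsto (fun P => EE P l) (nhdsWithin 0 (Ioi 0)) (nhds 0) ∧
      Tendsto (fun P => EE P l) atTop (nhds 0)) ∧
    (∀ P : ℝ, 0 < P →
      Tendsto (fun l => EE P l) (nhdsWithin 0 (Ioi 0)) (nhds 0) ∧
      Tendsto (fun l => EE P l) atTop (nhds 0)) := by
  have hα0 : (0:ℝ) < α := by rw [hα]; norm_num
  have hβ0 : (0:ℝ) < 2 / β := by positivity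
  have hPc : 0 < Pc := lt_of_lt_of_le hPi hPcPi
  have hLf : ∀ t : ℝ, 0 < t → 0 < L t ∧ L t < 1 ∧ L t ≤ t := by
    intro t ht
    rw [hL]
    exact aux_L_facts α t hα0 ht
  have hMf0 : ∀ t : ℝ, 0 < t → 0 ≤ Mf t := by
    intro t ht
    rcases hMf with h | h
    · simp [h]
    · rw [h, hM]
      have := (hLf t ht).2.2
      linarith
  have hQf : ∀ l P : ℝ, 0 < l → 0 < P → 0 ≤ Q l P ∧ Q l P ≤ 1 := by
    intro l P hl hP
    have ht : 0 < lMT / l := div_pos hMT hl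
    obtain ⟨hL0, hL1, -⟩ := hLf _ ht
    rw [hQ]
    constructor
    · have harg : 0 ≤ Real.pi * l * (P / η) ^ (2 / β) * (1 + Υ * L (lMT / l)) := by
        have h1 : 0 ≤ (P / η) ^ (2 / β) := Real.rpow_nonneg (by positivity) _
        have h2 : 0 ≤ 1 + Υ * L (lMT / l) := by nlinarith
        have h3 := Real.pi_pos
        positivity
      have := Real.exp_le_one_iff.mpr
        (by linarith : -(Real.pi * l * (P / η) ^ (2 / β) * (1 + Υ * L (lMT / l))) ≤ 0)
      linarith
    · have := Real.exp_pos (-(Real.pi * l * (P / η) ^ (2 / β) * (1 + Υ * L (lMT / l))))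
      linarith
  -- main bounds
  have hEEb : ∀ P l : ℝ, 0 < P → 0 < l →
      0 ≤ EE P l ∧ EE P l ≤ A * Q l P / Pi ∧ EE P l ≤ A * L (lMT / l) / Pi ∧
      EE P l ≤ A / P := by
    intro P l hP hl
    have ht : 0 < lMT / l := div_pos hMT hl
    obtain ⟨hL0, hL1, -⟩ := hLf _ ht
    obtain ⟨hQ0, hQ1⟩ := hQf l P hl hP
    have hMfn := hMf0 _ ht
    have hmul1 : 0 ≤ L (lMT / l) * (P + Pc - Pi) :=
      mul_nonneg hL0.le (by linarith)
    have hmul2 : 0 ≤ Mf (lMT / l) * Pc := mul_nonneg hMfn hPc.le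
    have hmul3 : 0 ≤ L (lMT / l) * (Pc - Pi) :=
      mul_nonneg hL0.le (by linarith)
    have hc1 : (1:ℝ) ≤ 1 + Υ * L (lMT / l) := by nlinarith
    have hInner : Pi ≤ L (lMT / l) * (P + Pc - Pi) + Pi + Mf (lMT / l) * Pc := by
      linarith
    have hInner0 : 0 ≤ L (lMT / l) * (P + Pc - Pi) + Pi + Mf (lMT / l) * Pc := by
      linarith
    have hD1 : Pi ≤ (1 + Υ * L (lMT / l)) *
        (L (lMT / l) * (P + Pc - Pi) + Pi + Mf (lMT / l) * Pc) := by
      nlinarith [mul_le_mul_of_nonneg_right hc1 hInner0]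
    have hD2 : L (lMT / l) * P ≤ (1 + Υ * L (lMT / l)) *
        (L (lMT / l) * (P + Pc - Pi) + Pi + Mf (lMT / l) * Pc) := by
      nlinarith [mul_le_mul_of_nonneg_right hc1 hInner0]
    have hDpos : 0 < (1 + Υ * L (lMT / l)) *
        (L (lMT / l) * (P + Pc - Pi) + Pi + Mf (lMT / l) * Pc) :=
      lt_of_lt_of_le hPi hD1
    have hb1 : A * L (lMT / l) * Q l P ≤ A * Q l P := by
      calc A * L (lMT / l) * Q l P ≤ A * 1 * Q l P :=
            mul_le_mul_of_nonneg_right (mul_le_mul_of_nonneg_left hL1.le hA.le) hQ0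
        _ = A * Q l P := by ring
    have hb2 : A * L (lMT / l) * Q l P ≤ A * L (lMT / l) := by
      calc A * L (lMT / l) * Q l P ≤ A * L (lMT / l) * 1 :=
            mul_le_mul_of_nonneg_left hQ1 (mul_nonneg hA.le hL0.le)
        _ = A * L (lMT / l) := by ring
    rw [hEE]
    refine ⟨div_nonneg (by positivity) hDpos.le, ?_, ?_, ?_⟩
    · exact div_le_div₀ (by positivity) hb1 hPi hD1
    · exact div_le_div₀ (by positivity) hb2 hPi hD1
    · have hb3 := div_le_div₀ (by positivity : (0:ℝ) ≤ A * L (lMT / l)) hb2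
        (by positivity : (0:ℝ) < L (lMT / l) * P) hD2
      have heq : A * L (lMT / l) / (L (lMT / l) * P) = A / P := by
        rw [mul_comm A (L (lMT / l)), mul_div_mul_left _ _ hL0.ne']
      linarith [heq ▸ hb3]
  constructor
  · intro l hl
    constructor
    · -- P → 0⁺
      refine squeeze_zero'
        (g := fun P : ℝ =>
          A * (1 - Real.exp (-(Real.pi * l * (P / η) ^ (2 / β) * (1 + Υ * L (lMT / l))))) / Pi)
        ?_ ?_ ?_
      · filter_upwards [self_mem_nhdsWithin] with P hP
        exact (hEEb P l hP hl).1
      · filter_upwards [self_mem_nhdsWithin] with P hP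
        have h := (hEEb P l hP hl).2.1
        rw [hQ] at h
        exact h
      · have t0 : Tendsto (fun P : ℝ => P / η) (𝓝[>] (0:ℝ)) (𝓝 0) := by
          have h := (continuous_id.div_const η).tendsto 0
          simpa using h.mono_left nhdsWithin_le_nhds
        have t1 : Tendsto (fun P : ℝ => (P / η) ^ (2 / β)) (𝓝[>] (0:ℝ)) (𝓝 0) := by
          have h := (Real.continuousAt_rpow_const 0 (2 / β) (Or.inr hβ0.le)).tendsto
          rw [Real.zero_rpow hβ0.ne'] at h
          exact h.comp t0
        have t2 : Tendsto
            (fun P : ℝ => -(Real.pi * l * (P / η) ^ (2 / β) * (1 + Υ * L (lMT / l))))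
            (𝓝[>] (0:ℝ)) (𝓝 0) := by
          simpa using ((t1.const_mul (Real.pi * l)).mul_const (1 + Υ * L (lMT / l))).neg
        have t3 := (Real.continuous_exp.tendsto 0).comp t2
        rw [Real.exp_zero] at t3
        have t4 : Tendsto
            (fun P : ℝ =>
              1 - Real.exp (-(Real.pi * l * (P / η) ^ (2 / β) * (1 + Υ * L (lMT / l)))))
            (𝓝[>] (0:ℝ)) (𝓝 0) := by
          simpa [Function.comp] using t3.const_sub 1
        simpa using (t4.const_mul A).div_const Pi
    · -- P → ∞
      refine squeeze_zero' (g := fun P : ℝ => A / P) ?_ ?_ ?_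
      · filter_upwards [eventually_gt_atTop 0] with P hP
        exact (hEEb P l hP hl).1
      · filter_upwards [eventually_gt_atTop 0] with P hP
        exact (hEEb P l hP hl).2.2.2
      · simpa [div_eq_mul_inv] using tendsto_inv_atTop_zero.const_mul A
  · intro P hP
    constructor
    · -- l → 0⁺
      refine squeeze_zero'
        (g := fun l : ℝ =>
          A * (1 - Real.exp (-(Real.pi * l * (P / η) ^ (2 / β) * (1 + Υ)))) / Pi)
        ?_ ?_ ?_
      · filter_upwards [self_mem_nhdsWithin] with l hl
        exact (hEEb P l hP hl).1
      · filter_upwards [self_mem_nhdsWithin] with l hl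
        have hl' : 0 < l := hl
        have ht : 0 < lMT / l := div_pos hMT hl'
        obtain ⟨hL0, hL1, -⟩ := hLf _ ht
        have h := (hEEb P l hP hl').2.1
        rw [hQ] at h
        refine h.trans ?_
        have hnn : 0 ≤ Real.pi * l * (P / η) ^ (2 / β) := by
          have h1 : 0 ≤ (P / η) ^ (2 / β) := Real.rpow_nonneg (by positivity) _
          have h3 := Real.pi_pos
          positivity
        have hΥL : Υ * L (lMT / l) ≤ Υ := mul_le_of_le_one_right hΥ hL1.le
        have harg : Real.pi * l * (P / η) ^ (2 / β) * (1 + Υ * L (lMT / l)) ≤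
            Real.pi * l * (P / η) ^ (2 / β) * (1 + Υ) :=
          mul_le_mul_of_nonneg_left (by linarith) hnn
        have hexp := Real.exp_le_exp.mpr (neg_le_neg harg)
        have hnum : A * (1 - Real.exp (-(Real.pi * l * (P / η) ^ (2 / β) * (1 + Υ * L (lMT / l))))) ≤
            A * (1 - Real.exp (-(Real.pi * l * (P / η) ^ (2 / β) * (1 + Υ)))) :=
          mul_le_mul_of_nonneg_left (by linarith) hA.le
        have h9 : Real.exp (-(Real.pi * l * (P / η) ^ (2 / β) * (1 + Υ))) ≤ 1 :=
          Real.exp_le_one_iff.mpr (neg_nonpos.mpr (mul_nonneg hnn (by linarith)))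
        exact div_le_div₀ (mul_nonneg hA.le (by linarith)) hnum hPi le_rfl
      · have hc : Continuous
            (fun l : ℝ =>
              A * (1 - Real.exp (-(Real.pi * l * (P / η) ^ (2 / β) * (1 + Υ)))) / Pi) := by
          fun_prop
        have h : Tendsto
            (fun l : ℝ =>
              A * (1 - Real.exp (-(Real.pi * l * (P / η) ^ (2 / β) * (1 + Υ)))) / Pi)
            (𝓝[>] (0:ℝ))
            (𝓝 (A * (1 - Real.exp (-(Real.pi * 0 * (P / η) ^ (2 / β) * (1 + Υ)))) / Pi)) :=
          (hc.tendsto 0).mono_left nhdsWithin_le_nhds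
        simpa using h
    · -- l → ∞
      refine squeeze_zero' (g := fun l : ℝ => A * L (lMT / l) / Pi) ?_ ?_ ?_
      · filter_upwards [eventually_gt_atTop 0] with l hl
        exact (hEEb P l hP hl).1
      · filter_upwards [eventually_gt_atTop 0] with l hl
        exact (hEEb P l hP hl).2.2.1
      · have hdiv : Tendsto (fun l : ℝ => lMT / l) atTop (𝓝 0) := by
          simpa [div_eq_mul_inv] using tendsto_inv_atTop_zero.const_mul lMT
        have hrc : ContinuousAt (fun x : ℝ => x ^ (-α)) 1 :=
          Real.continuousAt_rpow_const 1 (-α) (Or.inl one_ne_zero)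
        have h1 : Tendsto (fun t : ℝ => 1 + t / α) (𝓝 0) (𝓝 1) := by
          have hcont : Continuous (fun t : ℝ => 1 + t / α) := by fun_prop
          simpa using hcont.tendsto 0
        have hco : Tendsto (fun t : ℝ => (1 + t / α) ^ (-α)) (𝓝 0) (𝓝 1) := by
          have h := hrc.tendsto.comp h1
          simpa [Function.comp_def, Real.one_rpow] using h
        have tL : Tendsto (fun l : ℝ => L (lMT / l)) atTop (𝓝 0) := by
          have h := (hco.comp hdiv).const_sub 1
          have heq : (fun l : ℝ => L (lMT / l)) =
              fun l : ℝ => 1 - (1 + (lMT / l) / α) ^ (-α) := funext fun l => hL _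
          rw [heq]
          simpa [Function.comp] using h
        simpa using (tL.const_mul A).div_const Pi
end

section
/- Fix λ > 0 and consider the closed-form energy efficiency P ↦ EE(P, λ) defined below (either Load Model). Then P ↦ EE(P, λ) is a unimodal, strictly pseudo-concave function on (0, ∞): there exists a unique P* ∈ (0, ∞) with ∂EE/∂P(P*, λ) = 0; moreover ∂EE/∂P(P, λ) > 0 for 0 < P < P* and ∂EE/∂P(P, λ) < 0 for P > P*; the stationary point P* is characterized as the unique solution of S_P(P*) = P_i, where S_P(P) = L(λ_MT/λ)·(Q(λ,P)/(∂Q/∂P)(λ,P) − P − (P_c − P_i)) − P_c·ℳ(λ_MT/λ); and for any bounds 0 < P_min ≤ P_max, the unique maximizer of EE(·, λ) over [P_min, P_max] is max{P_min, min{P*, P_max}}. -/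
open Real Filter Set Topology

noncomputable def qfEE (k a P : ℝ) : ℝ := 1 - Real.exp (-(k * P ^ a))
noncomputable def q1fEE (k a P : ℝ) : ℝ := k * a * P ^ (a - 1) * Real.exp (-(k * P ^ a))
noncomputable def gfEE (k a D E P : ℝ) : ℝ := q1fEE k a P * (D * P + E) - D * qfEE k a P

lemma qfEE_hasDerivAt {k a P : ℝ} (hP : 0 < P) :
    HasDerivAt (qfEE k a) (q1fEE k a P) P := by
  have h1 : HasDerivAt (fun x : ℝ => x ^ a) (a * P ^ (a - 1)) P :=
    Real.hasDerivAt_rpow_const (Or.inl hP.ne')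
  have h2 : HasDerivAt (fun x : ℝ => -(k * x ^ a)) (-(k * (a * P ^ (a - 1)))) P :=
    (h1.const_mul k).neg
  have h3 := h2.exp
  have h4 := (hasDerivAt_const P (1 : ℝ)).sub h3
  refine h4.congr_deriv ?_
  unfold q1fEE
  ring


lemma q1fEE_hasDerivAt {k a P : ℝ} (hP : 0 < P) :
    HasDerivAt (q1fEE k a)
      (k * a * Real.exp (-(k * P ^ a)) * ((a - 1) * P ^ (a - 2) - k * a * P ^ (2 * a - 2))) P := by
  have h1 : HasDerivAt (fun x : ℝ => x ^ (a - 1)) ((a - 1) * P ^ (a - 1 - 1)) P :=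
    Real.hasDerivAt_rpow_const (Or.inl hP.ne')
  have h2 : HasDerivAt (fun x : ℝ => -(k * x ^ a)) (-(k * (a * P ^ (a - 1)))) P :=
    ((Real.hasDerivAt_rpow_const (Or.inl hP.ne')).const_mul k).neg
  have h3 := ((h1.const_mul (k * a)).mul h2.exp)
  refine h3.congr_deriv ?_
  have e1 : a - 1 - 1 = a - 2 := by ring
  have e2 : P ^ (2 * a - 2) = P ^ (a - 1) * P ^ (a - 1) := by
    rw [← Real.rpow_add hP]; ring_nf
  rw [e1, e2]
  ring

lemma gfEE_hasDerivAt {k a D E P : ℝ} (hP : 0 < P) :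
    HasDerivAt (gfEE k a D E)
      (k * a * Real.exp (-(k * P ^ a)) * ((a - 1) * P ^ (a - 2) - k * a * P ^ (2 * a - 2))
        * (D * P + E)) P := by
  have hlin : HasDerivAt (fun x : ℝ => D * x + E) D P := by
    simpa using ((hasDerivAt_id P).const_mul D).add_const E
  have h := ((q1fEE_hasDerivAt (k:=k) (a:=a) hP).mul hlin).sub
    ((qfEE_hasDerivAt (k:=k) (a:=a) hP).const_mul D)
  refine h.congr_deriv ?_
  ring


lemma gfEE_strictAntiOn {k a D E : ℝ} (hk : 0 < k) (ha0 : 0 < a) (ha1 : a < 1)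
    (hD : 0 < D) (hE : 0 < E) : StrictAntiOn (gfEE k a D E) (Ioi 0) := by
  apply strictAntiOn_of_deriv_neg (convex_Ioi 0)
  · exact fun x hx => ((gfEE_hasDerivAt hx).continuousAt).continuousWithinAt
  · intro x hx
    rw [interior_Ioi] at hx
    rw [(gfEE_hasDerivAt hx).deriv]
    have h1 : (0:ℝ) < k * a * Real.exp (-(k * x ^ a)) :=
      mul_pos (mul_pos hk ha0) (Real.exp_pos _)
    have h2 : (a - 1) * x ^ (a - 2) - k * a * x ^ (2 * a - 2) < 0 := by
      have hx1 : (0:ℝ) < x ^ (a - 2) := Real.rpow_pos_of_pos hx _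
      have hx2 : (0:ℝ) < x ^ (2 * a - 2) := Real.rpow_pos_of_pos hx _
      nlinarith [mul_pos (mul_pos hk ha0) hx2]
    have hx' : (0:ℝ) < x := hx
    have h3 : (0:ℝ) < D * x + E := by nlinarith
    exact mul_neg_of_neg_of_pos (mul_neg_of_pos_of_neg h1 h2) h3

lemma q1fEE_tendsto_nhdsGT (k a : ℝ) (hk : 0 < k) (ha0 : 0 < a) (ha1 : a < 1) :
    Tendsto (q1fEE k a) (𝓝[>] (0:ℝ)) atTop := by
  have h_rp : Tendsto (fun P : ℝ => P ^ (a - 1)) (𝓝[>] (0:ℝ)) atTop := by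
    have h := (tendsto_rpow_atTop (by linarith : (0:ℝ) < 1 - a)).comp tendsto_inv_nhdsGT_zero
    refine h.congr' ?_
    filter_upwards [self_mem_nhdsWithin] with P hP
    have hP' : (0:ℝ) < P := hP
    simp only [Function.comp]
    rw [← Real.rpow_neg_one P, ← Real.rpow_mul hP'.le]
    congr 1
    ring
  have h_exp : Tendsto (fun P : ℝ => Real.exp (-(k * P ^ a))) (𝓝[>] (0:ℝ)) (𝓝 1) := by
    have h1 : Tendsto (fun P : ℝ => P ^ a) (𝓝[>] (0:ℝ)) (𝓝 0) := by
      have := (Real.continuousAt_rpow_const 0 a (Or.inr ha0.le)).tendsto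
      rw [Real.zero_rpow ha0.ne'] at this
      exact this.mono_left nhdsWithin_le_nhds
    have h2 : Tendsto (fun P : ℝ => -(k * P ^ a)) (𝓝[>] (0:ℝ)) (𝓝 0) := by
      have := (h1.const_mul k).neg
      simpa using this
    have h3 := (Real.continuous_exp.tendsto 0).comp h2
    simpa [Function.comp_def] using h3
  have h := (h_rp.atTop_mul_pos one_pos h_exp).const_mul_atTop (mul_pos hk ha0)
  refine h.congr fun P => ?_
  unfold q1fEE; ring


lemma gfEE_tendsto_atTop (k a D E : ℝ) (hk : 0 < k) (ha0 : 0 < a) (ha1 : a < 1)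
    (hD : 0 < D) (hE : 0 < E) :
    Tendsto (gfEE k a D E) atTop (𝓝 (-D)) := by
  have hrp_top : Tendsto (fun P : ℝ => k * P ^ a) atTop atTop :=
    (tendsto_rpow_atTop ha0).const_mul_atTop hk
  have u1 : Tendsto (fun P : ℝ => P ^ a * Real.exp (-(k * P ^ a))) atTop (𝓝 0) := by
    have base : Tendsto (fun y : ℝ => y * Real.exp (-y)) atTop (𝓝 0) := by
      simpa using Real.tendsto_pow_mul_exp_neg_atTop_nhds_zero 1
    have h := (base.comp hrp_top).const_mul (1/k)
    simp only [Function.comp] at h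
    rw [mul_zero] at h
    refine h.congr fun P => ?_
    field_simp
  have u2 : Tendsto (fun P : ℝ => P ^ (a - 1) * Real.exp (-(k * P ^ a))) atTop (𝓝 0) := by
    have h := u1.mul tendsto_inv_atTop_zero
    rw [mul_zero] at h
    refine h.congr' ?_
    filter_upwards [eventually_gt_atTop (0:ℝ)] with P hP
    rw [Real.rpow_sub_one hP.ne']
    ring
  have u3 : Tendsto (fun P : ℝ => qfEE k a P) atTop (𝓝 1) := by
    have hexp : Tendsto (fun P : ℝ => Real.exp (-(k * P ^ a))) atTop (𝓝 0) :=
      Real.tendsto_exp_atBot.comp (tendsto_neg_atTop_atBot.comp hrp_top)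
    have := (tendsto_const_nhds (x := (1:ℝ)) (f := atTop)).sub hexp
    simpa [qfEE] using this
  have h := (((u1.const_mul (k * a * D)).add (u2.const_mul (k * a * E))).sub (u3.const_mul D))
  norm_num at h
  refine h.congr' ?_
  filter_upwards [eventually_gt_atTop (0:ℝ)] with P hP
  have e : P ^ (a - 1) * P = P ^ a := by
    rw [Real.rpow_sub_one hP.ne']; field_simp
  unfold gfEE q1fEE qfEE
  rw [← e]
  ring


lemma gfEE_exists_root (k a D E : ℝ) (hk : 0 < k) (ha0 : 0 < a) (ha1 : a < 1)
    (hD : 0 < D) (hE : 0 < E) :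
    ∃ Pstar : ℝ, 0 < Pstar ∧ gfEE k a D E Pstar = 0 := by
  -- positive point
  obtain ⟨P₀, hP₀pos, hP₀⟩ : ∃ P₀ : ℝ, 0 < P₀ ∧ 0 < gfEE k a D E P₀ := by
    have hev : ∀ᶠ P in 𝓝[>] (0:ℝ), (D / E + 1) ≤ q1fEE k a P :=
      (q1fEE_tendsto_nhdsGT k a hk ha0 ha1).eventually_ge_atTop _
    have hev2 : ∀ᶠ P in 𝓝[>] (0:ℝ), 0 < P ∧ (D / E + 1) ≤ q1fEE k a P := by
      filter_upwards [self_mem_nhdsWithin, hev] with P h1 h2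
      exact ⟨h1, h2⟩
    obtain ⟨P₀, hP₀pos, hq1⟩ := hev2.exists
    refine ⟨P₀, hP₀pos, ?_⟩
    have hqlt : qfEE k a P₀ < 1 := by
      unfold qfEE; nlinarith [Real.exp_pos (-(k * P₀ ^ a))]
    have hDE : (D / E + 1) * E = D + E := by field_simp
    have hq1pos : 0 < q1fEE k a P₀ := by
      have : (0:ℝ) < D / E + 1 := by positivity
      linarith
    unfold gfEE
    nlinarith [mul_le_mul_of_nonneg_right hq1 (by positivity : (0:ℝ) ≤ D * P₀ + E),
      mul_le_mul_of_nonneg_left (by nlinarith : E ≤ D * P₀ + E) (le_of_lt (by positivity : (0:ℝ) < D/E+1))]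
  -- negative point
  obtain ⟨P₁, hP₁pos, hP₁⟩ : ∃ P₁ : ℝ, 0 < P₁ ∧ gfEE k a D E P₁ < 0 := by
    have hev : ∀ᶠ P in atTop, gfEE k a D E P < 0 :=
      (gfEE_tendsto_atTop k a D E hk ha0 ha1 hD hE).eventually_lt_const (by linarith : -D < 0)
    have hev2 : ∀ᶠ P in atTop, 0 < P ∧ gfEE k a D E P < 0 := by
      filter_upwards [eventually_gt_atTop (0:ℝ), hev] with P h1 h2
      exact ⟨h1, h2⟩
    obtain ⟨P₁, h1, h2⟩ := hev2.exists
    exact ⟨P₁, h1, h2⟩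
  have hanti := gfEE_strictAntiOn (k:=k) (a:=a) (D:=D) (E:=E) hk ha0 ha1 hD hE
  have h01 : P₀ < P₁ := by
    by_contra h
    push_neg at h
    rcases eq_or_lt_of_le h with rfl | h
    · linarith
    · have := hanti (mem_Ioi.mpr hP₁pos) (mem_Ioi.mpr hP₀pos) h
      linarith
  have hcont : ContinuousOn (gfEE k a D E) (Icc P₀ P₁) := fun x hx =>
    ((gfEE_hasDerivAt (lt_of_lt_of_le hP₀pos hx.1)).continuousAt).continuousWithinAt
  have := intermediate_value_Icc' h01.le hcont
  have h0mem : (0:ℝ) ∈ Icc (gfEE k a D E P₁) (gfEE k a D E P₀) := ⟨hP₁.le, hP₀.le⟩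
  obtain ⟨Pstar, hmem, hval⟩ := this h0mem
  exact ⟨Pstar, lt_of_lt_of_le hP₀pos hmem.1, hval⟩

/-- Theorem 1 of the paper: for fixed base-station density `λ > 0`, the
energy efficiency `P ↦ EE(P, λ)` is unimodal and strictly pseudo-concave on
`(0, ∞)`: it has a unique stationary point `P*`, its derivative is positive
before `P*` and negative after `P*`, the stationary point is the unique
solution of `S_P(P) = P_idle`, and for any bounds `0 < P_min ≤ P_max` the
unique maximizer over `[P_min, P_max]` is `max{P_min, min{P*, P_max}}`. -/
theorem energy_efficiency_unimodal_in_power (α β η Υ lMT A Pc Pi : ℝ)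
    (hα : α = 3.5) (hβ : 2 < β) (hη : 0 < η) (hΥ : 0 ≤ Υ) (hMT : 0 < lMT)
    (hA : 0 < A) (hPi : 0 < Pi) (hPcPi : Pi ≤ Pc)
    (L M Mf : ℝ → ℝ)
    (hL : ∀ t : ℝ, L t = 1 - (1 + t / α) ^ (-α))
    (hM : ∀ t : ℝ, M t = t - L t)
    (hMf : Mf = (fun _ => 0) ∨ Mf = M)
    (Q : ℝ → ℝ → ℝ)
    (hQ : ∀ l P : ℝ, Q l P =
      1 - Real.exp (-(Real.pi * l * (P / η) ^ (2 / β) * (1 + Υ * L (lMT / l)))))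
    (EE : ℝ → ℝ → ℝ)
    (hEE : ∀ P l : ℝ, EE P l = A * L (lMT / l) * Q l P /
      ((1 + Υ * L (lMT / l)) *
        (L (lMT / l) * (P + Pc - Pi) + Pi + Mf (lMT / l) * Pc)))
    (lam : ℝ) (hlam : 0 < lam)
    (SP : ℝ → ℝ)
    (hSP : ∀ P : ℝ, SP P = L (lMT / lam) *
      (Q lam P / deriv (fun P' => Q lam P') P - P - (Pc - Pi)) -
      Pc * Mf (lMT / lam)) :
    ∃ Pstar : ℝ, 0 < Pstar ∧
      deriv (fun P => EE P lam) Pstar = 0 ∧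
      (∀ P : ℝ, 0 < P → deriv (fun P => EE P lam) P = 0 → P = Pstar) ∧
      (∀ P : ℝ, 0 < P → P < Pstar → 0 < deriv (fun P => EE P lam) P) ∧
      (∀ P : ℝ, Pstar < P → deriv (fun P => EE P lam) P < 0) ∧
      (∀ P : ℝ, 0 < P → (SP P = Pi ↔ P = Pstar)) ∧
      (∀ Pmin Pmax : ℝ, 0 < Pmin → Pmin ≤ Pmax →
        IsMaxOn (fun P => EE P lam) (Icc Pmin Pmax) (max Pmin (min Pstar Pmax)) ∧
        (∀ P ∈ Icc Pmin Pmax, IsMaxOn (fun P => EE P lam) (Icc Pmin Pmax) P →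
          P = max Pmin (min Pstar Pmax))) := by
  have hπ : 0 < Real.pi := Real.pi_pos
  set t := lMT / lam with ht_def
  have ht : 0 < t := div_pos hMT hlam
  have hα0 : (0:ℝ) < α := by rw [hα]; norm_num
  have hbase : 1 < 1 + t / α := by
    have : 0 < t / α := div_pos ht hα0
    linarith
  have hLt : (1 + t / α) ^ (-α) < 1 :=
    Real.rpow_lt_one_of_one_lt_of_neg hbase (by linarith)
  have hLpos : 0 < L t := by rw [hL]; linarith
  have hMf0 : 0 ≤ Mf t := by
    rcases hMf with h | h
    · rw [h]
    · rw [h, hM t, hL t]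
      have hlog : Real.log (1 + t / α) ≤ t / α := by
        have := Real.log_le_sub_one_of_pos (by linarith : (0:ℝ) < 1 + t / α)
        linarith
      have hrpow : (1 + t / α) ^ (-α) = Real.exp (Real.log (1 + t / α) * (-α)) :=
        Real.rpow_def_of_pos (by linarith) _
      have h4 : α * (t / α) = t := by field_simp
      have h5 := mul_le_mul_of_nonneg_left hlog hα0.le
      have h1 : -t ≤ Real.log (1 + t / α) * (-α) := by nlinarith
      have h2 : Real.exp (-t) ≤ (1 + t / α) ^ (-α) := by
        rw [hrpow]; exact Real.exp_le_exp.mpr h1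
      have h3 : 1 - t ≤ Real.exp (-t) := by
        have := Real.add_one_le_exp (-t); linarith
      linarith
  set Lv := L t with hLv_def
  have hΥL : 0 < 1 + Υ * Lv := by nlinarith
  set a := 2 / β with ha_def
  have ha0 : 0 < a := div_pos two_pos (by linarith)
  have ha1 : a < 1 := by
    rw [ha_def, div_lt_one (by linarith)]; linarith
  have hηa : 0 < η ^ a := Real.rpow_pos_of_pos hη a
  set k := Real.pi * lam * (1 + Υ * Lv) / η ^ a with hk_def
  have hk : 0 < k := div_pos (mul_pos (mul_pos hπ hlam) hΥL) hηa
  have hD : 0 < Lv := hLpos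
  set E := Lv * (Pc - Pi) + Pi + Mf t * Pc with hE_def
  have hPc : 0 < Pc := lt_of_lt_of_le hPi hPcPi
  have hE : 0 < E := by
    rw [hE_def]
    nlinarith [mul_nonneg hMf0 hPc.le, mul_nonneg hLpos.le (sub_nonneg.mpr hPcPi)]
  set c := A * Lv / (1 + Υ * Lv) with hc_def
  have hc : 0 < c := div_pos (mul_pos hA hLpos) hΥL
  have hdenpos : ∀ P : ℝ, 0 < P → 0 < Lv * P + E := by
    intro P hP; nlinarith
  -- Q coincides with qfEE on positives
  have hQeq : ∀ P : ℝ, 0 < P → Q lam P = qfEE k a P := by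
    intro P hP
    rw [hQ lam P, ← ht_def, ← hLv_def]
    have harg : Real.pi * lam * (P / η) ^ a * (1 + Υ * Lv) = k * P ^ a := by
      rw [Real.div_rpow hP.le hη.le, hk_def]
      field_simp
    unfold qfEE
    rw [harg]
  have hQd : ∀ P : ℝ, 0 < P → HasDerivAt (fun P' => Q lam P') (q1fEE k a P) P := by
    intro P hP
    have hev : (fun P' => Q lam P') =ᶠ[nhds P] qfEE k a := by
      filter_upwards [IsOpen.mem_nhds isOpen_Ioi (mem_Ioi.mpr hP)] with x hx
      exact hQeq x hx
    exact (qfEE_hasDerivAt hP).congr_of_eventuallyEq hev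
  -- EE in closed form
  have hEEeq : ∀ P : ℝ, 0 < P → EE P lam = c * qfEE k a P / (Lv * P + E) := by
    intro P hP
    have hden : Lv * (P + Pc - Pi) + Pi + Mf t * Pc
        = Lv * P + (Lv * (Pc - Pi) + Pi + Mf t * Pc) := by ring
    rw [hEE P lam, ← ht_def, ← hLv_def, hQeq P hP, hc_def, hE_def, hden,
      div_mul_eq_mul_div, div_div]
  have hEEd : ∀ P : ℝ, 0 < P → HasDerivAt (fun P' => EE P' lam)
      (c * gfEE k a Lv E P / (Lv * P + E) ^ 2) P := by
    intro P hP
    have hlin : HasDerivAt (fun x : ℝ => Lv * x + E) Lv P := by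
      simpa using ((hasDerivAt_id P).const_mul Lv).add_const E
    have h := ((qfEE_hasDerivAt (k := k) (a := a) hP).const_mul c).div hlin (hdenpos P hP).ne'
    have h2 : HasDerivAt (fun P' => c * qfEE k a P' / (Lv * P' + E))
        (c * gfEE k a Lv E P / (Lv * P + E) ^ 2) P := by
      refine h.congr_deriv ?_
      unfold gfEE
      ring
    refine h2.congr_of_eventuallyEq ?_
    filter_upwards [IsOpen.mem_nhds isOpen_Ioi (mem_Ioi.mpr hP)] with x hx
    exact hEEeq x hx
  have hderiv : ∀ P : ℝ, 0 < P →
      deriv (fun P => EE P lam) P = c * gfEE k a Lv E P / (Lv * P + E) ^ 2 :=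
    fun P hP => (hEEd P hP).deriv
  obtain ⟨Pstar, hPstar, hgstar⟩ := gfEE_exists_root k a Lv E hk ha0 ha1 hD hE
  have hanti := gfEE_strictAntiOn (k := k) (a := a) (D := Lv) (E := E) hk ha0 ha1 hD hE
  have hgpos : ∀ P : ℝ, 0 < P → P < Pstar → 0 < gfEE k a Lv E P := by
    intro P hP hlt
    have := hanti (mem_Ioi.mpr hP) (mem_Ioi.mpr hPstar) hlt
    rw [hgstar] at this; exact this
  have hgneg : ∀ P : ℝ, Pstar < P → gfEE k a Lv E P < 0 := by
    intro P hlt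
    have := hanti (mem_Ioi.mpr hPstar) (mem_Ioi.mpr (lt_trans hPstar hlt)) hlt
    rw [hgstar] at this; exact this
  have hdpos : ∀ P : ℝ, 0 < P → P < Pstar → 0 < deriv (fun P => EE P lam) P := by
    intro P hP hlt
    rw [hderiv P hP]
    exact div_pos (mul_pos hc (hgpos P hP hlt)) (pow_pos (hdenpos P hP) 2)
  have hdneg : ∀ P : ℝ, Pstar < P → deriv (fun P => EE P lam) P < 0 := by
    intro P hlt
    have hP : 0 < P := lt_trans hPstar hlt
    rw [hderiv P hP]
    exact div_neg_of_neg_of_pos (mul_neg_of_pos_of_neg hc (hgneg P hlt))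
      (pow_pos (hdenpos P hP) 2)
  have hdzero : deriv (fun P => EE P lam) Pstar = 0 := by
    rw [hderiv Pstar hPstar, hgstar]; simp
  have huniq : ∀ P : ℝ, 0 < P → deriv (fun P => EE P lam) P = 0 → P = Pstar := by
    intro P hP h
    by_contra hne
    rcases lt_or_gt_of_ne hne with hlt | hgt
    · have := hdpos P hP hlt; linarith
    · have := hdneg P hgt; linarith
  have hq1pos : ∀ P : ℝ, 0 < P → 0 < q1fEE k a P := by
    intro P hP
    unfold q1fEE
    exact mul_pos (mul_pos (mul_pos hk ha0) (Real.rpow_pos_of_pos hP _)) (Real.exp_pos _)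
  have hSPiff : ∀ P : ℝ, 0 < P → (SP P = Pi ↔ P = Pstar) := by
    intro P hP
    have hd := (hQd P hP).deriv
    have hq1 := (hq1pos P hP).ne'
    have hrel : Lv * (qfEE k a P / q1fEE k a P - P - (Pc - Pi)) - Pc * Mf t - Pi
        = -(gfEE k a Lv E P) / q1fEE k a P := by
      rw [hE_def]
      unfold gfEE
      field_simp
      ring
    have key : SP P = Pi ↔ gfEE k a Lv E P = 0 := by
      rw [hSP P, hd, hQeq P hP]
      constructor
      · intro h
        have h0 : -(gfEE k a Lv E P) / q1fEE k a P = 0 := by rw [← hrel]; linarith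
        have := (div_eq_zero_iff.mp h0).resolve_right hq1
        linarith
      · intro h
        have : -(gfEE k a Lv E P) / q1fEE k a P = 0 := by rw [h]; simp
        rw [← hrel] at this
        linarith
    rw [key]
    constructor
    · intro h
      exact hanti.injOn (mem_Ioi.mpr hP) (mem_Ioi.mpr hPstar) (h.trans hgstar.symm)
    · intro h; rw [h]; exact hgstar
  have hcontEE : ∀ x : ℝ, 0 < x → ContinuousAt (fun P => EE P lam) x :=
    fun x hx => (hEEd x hx).continuousAt
  have hmono : StrictMonoOn (fun P => EE P lam) (Ioc 0 Pstar) := by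
    apply strictMonoOn_of_deriv_pos (convex_Ioc 0 Pstar)
    · exact fun x hx => (hcontEE x hx.1).continuousWithinAt
    · intro x hx
      rw [interior_Ioc] at hx
      exact hdpos x hx.1 hx.2
  have hantiEE : StrictAntiOn (fun P => EE P lam) (Ici Pstar) := by
    apply strictAntiOn_of_deriv_neg (convex_Ici Pstar)
    · exact fun x hx => (hcontEE x (lt_of_lt_of_le hPstar hx)).continuousWithinAt
    · intro x hx
      rw [interior_Ici] at hx
      exact hdneg x hx
  refine ⟨Pstar, hPstar, hdzero, huniq, hdpos, hdneg, hSPiff, ?_⟩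
  intro Pmin Pmax hPmin hle
  set m := max Pmin (min Pstar Pmax) with hm_def
  have hm_mem : m ∈ Icc Pmin Pmax := ⟨le_max_left _ _, max_le hle (min_le_right _ _)⟩
  have hm_pos : 0 < m := lt_of_lt_of_le hPmin hm_mem.1
  have key : ∀ P ∈ Icc Pmin Pmax, P ≠ m → EE P lam < EE m lam := by
    intro P hP hne
    rcases lt_or_gt_of_ne hne with hlt | hgt
    · have hm2 : m ≤ Pstar := by
        rcases max_choice Pmin (min Pstar Pmax) with h | h
        · rw [← hm_def] at h
          exfalso; rw [h] at hlt; linarith [hP.1]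
        · rw [← hm_def] at h
          rw [h]; exact min_le_left _ _
      have hPmem : P ∈ Ioc 0 Pstar := ⟨lt_of_lt_of_le hPmin hP.1, le_trans hlt.le hm2⟩
      have hmmem : m ∈ Ioc 0 Pstar := ⟨hm_pos, hm2⟩
      exact hmono hPmem hmmem hlt
    · have hm2 : Pstar ≤ m := by
        rcases le_total Pstar Pmax with h | h
        · have hmin : min Pstar Pmax = Pstar := min_eq_left h
          rw [hm_def]
          exact le_max_of_le_right (le_of_eq hmin.symm)
        · exfalso
          have h1 : min Pstar Pmax = Pmax := min_eq_right h
          have h2 : m = Pmax := by rw [hm_def, h1, max_eq_right hle]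
          have h3 := hP.2
          rw [← h2] at h3; linarith
      exact hantiEE (mem_Ici.mpr hm2) (mem_Ici.mpr (le_trans hm2 hgt.le)) hgt
  constructor
  · rw [isMaxOn_iff]
    intro P hP
    by_cases h : P = m
    · rw [h]
    · exact (key P hP h).le
  · intro P hPmem hPmax
    by_contra hne
    have h1 := key P hPmem hne
    have h2 := (isMaxOn_iff.mp hPmax) m hm_mem
    linarith
end

section
/- Fix P > 0 and consider the closed-form energy efficiency λ ↦ EE(P, λ) defined below (either Load Model). Then λ ↦ EE(P, λ) is a unimodal, strictly pseudo-concave function on (0, ∞): there exists a unique λ* ∈ (0, ∞) with ∂EE/∂λ(P, λ*) = 0; moreover ∂EE/∂λ(P, λ) > 0 for 0 < λ < λ* and ∂EE/∂λ(P, λ) < 0 for λ > λ*; and for any bounds 0 < λ_min ≤ λ_max, the unique maximizer of EE(P, ·) over [λ_min, λ_max] is max{λ_min, min{λ*, λ_max}}. -/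
open Real Filter Set Topology

namespace EEaux
noncomputable def bb (t : ℝ) : ℝ := 1 + t / 3.5
noncomputable def Lf (t : ℝ) : ℝ := 1 - bb t ^ (-(3.5:ℝ))
noncomputable def pf (t : ℝ) : ℝ := bb t ^ (-(4.5:ℝ))
noncomputable def rf (t : ℝ) : ℝ := bb t ^ (-(5.5:ℝ))

lemma bb_gt {t : ℝ} (ht : 0 < t) : 1 < bb t := by
  unfold bb; norm_num; linarith

lemma pow_eq {b z : ℝ} (hz : 0 < z) (hb : b = z ^ 2) (n : ℕ) (e : ℝ) (he : e = n / 2) :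
    b ^ (-e) = (z ^ n)⁻¹ := by
  subst hb
  have h1 : ((z ^ 2 : ℝ)) ^ (-e) = z ^ ((2:ℝ) * -e) := by
    rw [← Real.rpow_natCast z 2, ← Real.rpow_mul hz.le]; norm_num
  rw [h1, show (2:ℝ) * -e = -(n:ℝ) by rw [he]; ring,
    Real.rpow_neg hz.le, Real.rpow_natCast]

lemma z_rep {t : ℝ} (ht : 0 < t) :
    ∃ z : ℝ, 1 < z ∧ bb t = z ^ 2 ∧ t = 7/2 * (z^2 - 1) ∧
      Lf t = 1 - (z^7)⁻¹ ∧ pf t = (z^9)⁻¹ ∧ rf t = (z^11)⁻¹ := by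
  have hb1 : 1 < bb t := bb_gt ht
  have hb0 : (0:ℝ) < bb t := by linarith
  have hsq : Real.sqrt (bb t) ^ 2 = bb t := Real.sq_sqrt hb0.le
  have hz1 : 1 < Real.sqrt (bb t) := Real.lt_sqrt_of_sq_lt (by norm_num; exact hb1)
  have hz0 : 0 < Real.sqrt (bb t) := by linarith
  refine ⟨Real.sqrt (bb t), hz1, hsq.symm, ?_, ?_, ?_, ?_⟩
  · rw [hsq]; unfold bb; norm_num; ring
  · unfold Lf; rw [pow_eq hz0 hsq.symm 7 3.5 (by norm_num)]
  · unfold pf; rw [pow_eq hz0 hsq.symm 9 4.5 (by norm_num)]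
  · unfold rf; rw [pow_eq hz0 hsq.symm 11 5.5 (by norm_num)]

lemma polyA {z : ℝ} (hz : 1 < z) : 0 ≤ 5*z^9 - 9*z^7 + 9*z^2 - 5 := by
  have h : 5*z^9 - 9*z^7 + 9*z^2 - 5
      = (z-1)^3*(5*z^6+15*z^5+21*z^4+23*z^3+21*z^2+15*z+5) := by ring
  have h1 : (0:ℝ) ≤ z - 1 := by linarith
  have h2 : (0:ℝ) < z := by linarith
  rw [h]
  exact mul_nonneg (pow_nonneg h1 3) (by positivity)

lemma polyB {z : ℝ} (hz : 1 < z) :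
    0 ≤ 5*z^18 - 9*z^16 + 18*z^11 - 10*z^9 - 72*z^4 + 117*z^2 - 49 := by
  have h : 5*z^18 - 9*z^16 + 18*z^11 - 10*z^9 - 72*z^4 + 117*z^2 - 49
      = (z-1)^3*(49+147*z+177*z^2+139*z^3+105*z^4+75*z^5+49*z^6+27*z^7+9*z^8
        +5*z^9+15*z^10+21*z^11+23*z^12+21*z^13+15*z^14+5*z^15) := by ring
  have h1 : (0:ℝ) ≤ z - 1 := by linarith
  have h2 : (0:ℝ) < z := by linarith
  rw [h]
  exact mul_nonneg (pow_nonneg h1 3) (by positivity)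

lemma polyC {z : ℝ} (hz : 1 < z) : 0 ≤ 2*z^9 - 9*z^2 + 7 := by
  have h : 2*z^9 - 9*z^2 + 7
      = (z-1)^2*(7+14*z+12*z^2+10*z^3+8*z^4+6*z^5+4*z^6+2*z^7) := by ring
  have h1 : (0:ℝ) ≤ z - 1 := by linarith
  have h2 : (0:ℝ) < z := by linarith
  rw [h]
  exact mul_nonneg (pow_nonneg h1 2) (by positivity)

lemma polyD {z : ℝ} (hz : 1 < z) : 0 ≤ 7*(z^2-1)*z^7 - 2*z^7 + 2 := by
  have h : 7*(z^2-1)*z^7 - 2*z^7 + 2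
      = (z-1)^2*(2+4*z+6*z^2+8*z^3+10*z^4+12*z^5+14*z^6+7*z^7) := by ring
  have h1 : (0:ℝ) ≤ z - 1 := by linarith
  have h2 : (0:ℝ) < z := by linarith
  rw [h]
  exact mul_nonneg (pow_nonneg h1 2) (by positivity)

lemma basics {t : ℝ} (ht : 0 < t) :
    0 < pf t ∧ pf t ≤ 1 ∧ 0 < Lf t ∧ Lf t < 1 ∧ Lf t ≤ t ∧ t * pf t ≤ Lf t ∧ 0 < rf t := by
  obtain ⟨z, hz, hbz, htz, hLz, hpz, hrz⟩ := z_rep ht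
  have hz0 : (0:ℝ) < z := by linarith
  have hz9 : (0:ℝ) < z^9 := by positivity
  have hz7 : (0:ℝ) < z^7 := by positivity
  have hz7' : (1:ℝ) < z^7 := one_lt_pow₀ hz (by norm_num)
  have hz9' : (1:ℝ) < z^9 := one_lt_pow₀ hz (by norm_num)
  refine ⟨?_, ?_, ?_, ?_, ?_, ?_, ?_⟩
  · rw [hpz]; positivity
  · rw [hpz]; exact inv_le_one_of_one_le₀ hz9'.le
  · rw [hLz]
    have h7 : (z^7)⁻¹ < 1 := inv_lt_one_of_one_lt₀ hz7'
    linarith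
  · rw [hLz]
    have h7 : (0:ℝ) < (z^7)⁻¹ := by positivity
    linarith
  · rw [hLz]
    conv_lhs => skip
    rw [show (1:ℝ) - (z^7)⁻¹ = (z^7-1)/z^7 by field_simp]
    rw [htz, div_le_iff₀ hz7]
    nlinarith [polyD hz]
  · rw [hpz, hLz, show (1:ℝ) - (z^7)⁻¹ = (z^7-1)/z^7 by field_simp, htz,
      show 7/2*(z^2-1)*(z^9)⁻¹ = (7/2*(z^2-1))/z^9 by ring, div_le_div_iff₀ hz9 hz7]
    nlinarith [polyC hz]
  · rw [hrz]; positivity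

lemma J0_nonneg {t : ℝ} (ht : 0 < t) :
    0 ≤ 2*t*(pf t)^2 - 2*Lf t*pf t + 9/7*t*Lf t*rf t := by
  obtain ⟨z, hz, hbz, htz, hLz, hpz, hrz⟩ := z_rep ht
  have hz0 : (0:ℝ) < z := by linarith
  have hzne : z ≠ 0 := ne_of_gt hz0
  have key : (2*t*(pf t)^2 - 2*Lf t*pf t + 9/7*t*Lf t*rf t) * (2*z^18)
      = 5*z^9 - 9*z^7 + 9*z^2 - 5 := by
    rw [hpz, hLz, hrz, htz]; field_simp; ring
  nlinarith [polyA hz, key, pow_pos hz0 18]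

lemma J1_nonneg {t : ℝ} (ht : 0 < t) :
    0 ≤ -2*(pf t)^3*t^2 + 4*t*Lf t*(pf t)^2 - 2*(Lf t)^2*pf t + 9/7*t*(Lf t)^2*rf t := by
  obtain ⟨z, hz, hbz, htz, hLz, hpz, hrz⟩ := z_rep ht
  have hz0 : (0:ℝ) < z := by linarith
  have hzne : z ≠ 0 := ne_of_gt hz0
  have key : (-2*(pf t)^3*t^2 + 4*t*Lf t*(pf t)^2 - 2*(Lf t)^2*pf t + 9/7*t*(Lf t)^2*rf t)
      * (2*z^27)
      = 5*z^18 - 9*z^16 + 18*z^11 - 10*z^9 - 72*z^4 + 117*z^2 - 49 := by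
    rw [hpz, hLz, hrz, htz]; field_simp; ring
  nlinarith [polyB hz, key, pow_pos hz0 27]

noncomputable def uf (Υ t : ℝ) : ℝ := 1 + Υ * Lf t
noncomputable def wf (Υ t : ℝ) : ℝ := uf Υ t / t
noncomputable def w1 (Υ t : ℝ) : ℝ := (Υ * pf t * t - uf Υ t) / t^2
noncomputable def w2 (Υ t : ℝ) : ℝ := -(9/7)*Υ*rf t/t - 2*Υ*pf t/t^2 + 2*uf Υ t/t^3
noncomputable def Ef (c Υ t : ℝ) : ℝ := Real.exp (-(c * wf Υ t))
noncomputable def Nf (c Υ t : ℝ) : ℝ := Lf t * (1 - Ef c Υ t)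
noncomputable def N1 (c Υ t : ℝ) : ℝ := pf t * (1 - Ef c Υ t) + c * Lf t * w1 Υ t * Ef c Υ t
noncomputable def N2 (c Υ t : ℝ) : ℝ := -(9/7)*rf t*(1 - Ef c Υ t)
  + c*Ef c Υ t*(2*pf t*w1 Υ t + Lf t*w2 Υ t - c*Lf t*(w1 Υ t)^2)
noncomputable def Gf (χ C Pi Pc t : ℝ) : ℝ := Lf t * C + Pi + χ*(t - Lf t)*Pc
noncomputable def G1 (χ C Pc t : ℝ) : ℝ := pf t * C + χ*(1 - pf t)*Pc
noncomputable def Df (Υ χ C Pi Pc t : ℝ) : ℝ := uf Υ t * Gf χ C Pi Pc t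
noncomputable def D1 (Υ χ C Pi Pc t : ℝ) : ℝ :=
  Υ*pf t*Gf χ C Pi Pc t + uf Υ t*G1 χ C Pc t
noncomputable def D2 (Υ χ C Pi Pc t : ℝ) : ℝ := -(9/7)*Υ*rf t*Gf χ C Pi Pc t
  + 2*Υ*pf t*G1 χ C Pc t + uf Υ t*(-(9/7)*rf t*(C - χ*Pc))
noncomputable def gfun (c Υ χ C Pi Pc t : ℝ) : ℝ :=
  N1 c Υ t * Df Υ χ C Pi Pc t - Nf c Υ t * D1 Υ χ C Pi Pc t
noncomputable def hfun (c Υ χ C Pi Pc t : ℝ) : ℝ := gfun c Υ χ C Pi Pc t / pf t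

lemma hda {f g : ℝ → ℝ} {a b t : ℝ} (h : HasDerivAt g b t) (hf : f = g) (hab : a = b) :
    HasDerivAt f a t := by
  subst hf hab; exact h

lemma hd_bb (t : ℝ) : HasDerivAt bb (2/7) t := by
  have h : HasDerivAt (fun x : ℝ => 1 + x / 3.5) (1/3.5) t := by
    simpa using ((hasDerivAt_id t).div_const 3.5).const_add 1
  refine hda h rfl ?_ <;> norm_num

lemma hd_Lf {t : ℝ} (ht : 0 < t) : HasDerivAt Lf (pf t) t := by
  have hb0 : (0:ℝ) < bb t := lt_trans one_pos (bb_gt ht)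
  have h := (hd_bb t).rpow_const (p := -(3.5:ℝ)) (Or.inl (ne_of_gt hb0))
  have h2 := (hasDerivAt_const t (1:ℝ)).sub h
  refine hda h2 rfl ?_
  unfold pf; rw [show (-(3.5:ℝ) - 1) = -(4.5:ℝ) by norm_num]; ring

lemma hd_pf {t : ℝ} (ht : 0 < t) : HasDerivAt pf (-(9/7) * rf t) t := by
  have hb0 : (0:ℝ) < bb t := lt_trans one_pos (bb_gt ht)
  have h := (hd_bb t).rpow_const (p := -(4.5:ℝ)) (Or.inl (ne_of_gt hb0))
  refine hda h rfl ?_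
  unfold rf; rw [show (-(4.5:ℝ) - 1) = -(5.5:ℝ) by norm_num]; ring

lemma hd_uf (Υ : ℝ) {t : ℝ} (ht : 0 < t) : HasDerivAt (uf Υ) (Υ * pf t) t := by
  exact ((hd_Lf ht).const_mul Υ).const_add 1

lemma hd_wf (Υ : ℝ) {t : ℝ} (ht : 0 < t) : HasDerivAt (wf Υ) (w1 Υ t) t := by
  have h := (hd_uf Υ ht).div (hasDerivAt_id t) (ne_of_gt ht)
  refine hda h rfl ?_
  unfold w1; simp only [id_eq]; ring

lemma hd_w1 (Υ : ℝ) {t : ℝ} (ht : 0 < t) : HasDerivAt (w1 Υ) (w2 Υ t) t := by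
  have hnum : HasDerivAt (fun x => Υ * pf x * x - uf Υ x)
      ((Υ * (-(9/7) * rf t) * t + Υ * pf t * 1) - Υ * pf t) t :=
    (((hd_pf ht).const_mul Υ).mul (hasDerivAt_id t)).sub (hd_uf Υ ht)
  have hden : HasDerivAt (fun x : ℝ => x^2) (2*t) t := by
    simpa using hasDerivAt_pow 2 t
  have h := hnum.div hden (by positivity)
  refine hda h rfl ?_
  unfold w2
  field_simp
  ring

lemma hd_Ef (c Υ : ℝ) {t : ℝ} (ht : 0 < t) :
    HasDerivAt (Ef c Υ) (-(c * w1 Υ t) * Ef c Υ t) t := by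
  have h := (((hd_wf Υ ht).const_mul c).neg).exp
  refine hda h rfl ?_
  unfold Ef; simp only [Pi.neg_apply]; ring

lemma hd_Nf (c Υ : ℝ) {t : ℝ} (ht : 0 < t) : HasDerivAt (Nf c Υ) (N1 c Υ t) t := by
  have h := (hd_Lf ht).mul ((hasDerivAt_const t (1:ℝ)).sub (hd_Ef c Υ ht))
  refine hda h rfl ?_
  unfold N1; simp only [Pi.sub_apply]; ring

lemma hd_N1 (c Υ : ℝ) {t : ℝ} (ht : 0 < t) : HasDerivAt (N1 c Υ) (N2 c Υ t) t := by
  have h1 := (hd_pf ht).mul ((hasDerivAt_const t (1:ℝ)).sub (hd_Ef c Υ ht))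
  have h2 := ((((hd_Lf ht).const_mul c).mul (hd_w1 Υ ht)).mul (hd_Ef c Υ ht))
  have h := h1.add h2
  refine hda h rfl ?_
  unfold N2; simp only [Pi.sub_apply, Pi.mul_apply]; ring

lemma hd_Gf (χ C Pi Pc : ℝ) {t : ℝ} (ht : 0 < t) :
    HasDerivAt (Gf χ C Pi Pc) (G1 χ C Pc t) t := by
  have h1 : HasDerivAt (fun x => Lf x * C + Pi) (pf t * C) t :=
    ((hd_Lf ht).mul_const C).add_const Pi
  have h2 : HasDerivAt (fun x => χ * (x - Lf x) * Pc) (χ * (1 - pf t) * Pc) t :=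
    ((((hasDerivAt_id t).sub (hd_Lf ht)).const_mul χ).mul_const Pc)
  have h := h1.add h2
  refine hda h rfl rfl
  all_goals skip

lemma hd_G1 (χ C Pc : ℝ) {t : ℝ} (ht : 0 < t) :
    HasDerivAt (G1 χ C Pc) (-(9/7)*rf t*(C - χ*Pc)) t := by
  have h1 : HasDerivAt (fun x => pf x * C) (-(9/7)*rf t * C) t := (hd_pf ht).mul_const C
  have h2 : HasDerivAt (fun x => χ * (1 - pf x) * Pc) (χ * (0 - -(9/7)*rf t) * Pc) t :=
    ((((hasDerivAt_const t (1:ℝ)).sub (hd_pf ht)).const_mul χ).mul_const Pc)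
  have h := h1.add h2
  refine hda h rfl ?_
  try ring

lemma hd_Df (Υ χ C Pi Pc : ℝ) {t : ℝ} (ht : 0 < t) :
    HasDerivAt (Df Υ χ C Pi Pc) (D1 Υ χ C Pi Pc t) t := by
  have h := (hd_uf Υ ht).mul (hd_Gf χ C Pi Pc ht)
  refine hda h rfl rfl
  all_goals skip

lemma hd_D1 (Υ χ C Pi Pc : ℝ) {t : ℝ} (ht : 0 < t) :
    HasDerivAt (D1 Υ χ C Pi Pc) (D2 Υ χ C Pi Pc t) t := by
  have h1 := (((hd_pf ht).const_mul Υ).mul (hd_Gf χ C Pi Pc ht))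
  have h2 := (hd_uf Υ ht).mul (hd_G1 χ C Pc ht)
  have h := h1.add h2
  refine hda h rfl ?_
  unfold D2; ring

lemma hd_gfun (c Υ χ C Pi Pc : ℝ) {t : ℝ} (ht : 0 < t) :
    HasDerivAt (gfun c Υ χ C Pi Pc)
      (N2 c Υ t * Df Υ χ C Pi Pc t - Nf c Υ t * D2 Υ χ C Pi Pc t) t := by
  have h := ((hd_N1 c Υ ht).mul (hd_Df Υ χ C Pi Pc ht)).sub
    ((hd_Nf c Υ ht).mul (hd_D1 Υ χ C Pi Pc ht))
  refine hda h rfl ?_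
  ring

lemma hd_hfun (c Υ χ C Pi Pc : ℝ) {t : ℝ} (ht : 0 < t) :
    HasDerivAt (hfun c Υ χ C Pi Pc)
      (((N2 c Υ t * Df Υ χ C Pi Pc t - Nf c Υ t * D2 Υ χ C Pi Pc t) * pf t
        - gfun c Υ χ C Pi Pc t * (-(9/7) * rf t)) / (pf t)^2) t := by
  have hp : pf t ≠ 0 := ne_of_gt (basics ht).1
  exact (hd_gfun c Υ χ C Pi Pc ht).div (hd_pf ht) hp

section signs
variable {c Υ χ C Pi Pc : ℝ} {t : ℝ}

lemma uf_ge (hΥ : 0 ≤ Υ) (ht : 0 < t) : 1 ≤ uf Υ t := by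
  have h := (basics ht).2.2.1
  unfold uf; nlinarith

lemma uf_pos (hΥ : 0 ≤ Υ) (ht : 0 < t) : 0 < uf Υ t := lt_of_lt_of_le one_pos (uf_ge hΥ ht)

lemma wf_pos (hΥ : 0 ≤ Υ) (ht : 0 < t) : 0 < wf Υ t :=
  div_pos (uf_pos hΥ ht) ht

lemma w1_neg (hΥ : 0 ≤ Υ) (ht : 0 < t) : w1 Υ t < 0 := by
  obtain ⟨hp, hp1, hL0, hL1, hLt, htp, hr⟩ := basics ht
  have hnum : Υ * pf t * t - uf Υ t < 0 := by
    have h1 : Υ * (t * pf t) ≤ Υ * Lf t := mul_le_mul_of_nonneg_left htp hΥ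
    unfold uf; nlinarith
  unfold w1
  exact div_neg_of_neg_of_pos hnum (by positivity)

lemma Ef_pos : 0 < Ef c Υ t := Real.exp_pos _

lemma Ef_lt1 (hc : 0 < c) (hΥ : 0 ≤ Υ) (ht : 0 < t) : Ef c Υ t < 1 := by
  unfold Ef
  rw [Real.exp_lt_one_iff]
  have := wf_pos hΥ ht
  nlinarith

lemma Nf_pos (hc : 0 < c) (hΥ : 0 ≤ Υ) (ht : 0 < t) : 0 < Nf c Υ t := by
  have h1 := (basics ht).2.2.1
  have h2 := Ef_lt1 hc hΥ ht
  unfold Nf; nlinarith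

lemma Gf_ge (hχ0 : 0 ≤ χ) (hC : 0 < C) (hPc : 0 ≤ Pc) (ht : 0 < t) :
    Pi ≤ Gf χ C Pi Pc t := by
  obtain ⟨hp, hp1, hL0, hL1, hLt, htp, hr⟩ := basics ht
  unfold Gf
  nlinarith [mul_pos hL0 hC, mul_nonneg (mul_nonneg hχ0 (sub_nonneg.2 hLt)) hPc]

lemma Df_ge (hΥ : 0 ≤ Υ) (hχ0 : 0 ≤ χ) (hC : 0 < C) (hPi : 0 < Pi) (hPc : 0 ≤ Pc)
    (ht : 0 < t) : Pi ≤ Df Υ χ C Pi Pc t := by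
  have h1 := uf_ge hΥ ht
  have h2 := Gf_ge (Pi := Pi) hχ0 hC hPc ht
  unfold Df; nlinarith

lemma G1_nonneg (hχ0 : 0 ≤ χ) (hC : 0 < C) (hPc : 0 ≤ Pc) (ht : 0 < t) :
    0 ≤ G1 χ C Pc t := by
  obtain ⟨hp, hp1, hL0, hL1, hLt, htp, hr⟩ := basics ht
  unfold G1
  nlinarith [mul_pos hp hC, mul_nonneg (mul_nonneg hχ0 (sub_nonneg.2 hp1)) hPc]

lemma KN_neg (hc : 0 < c) (hΥ : 0 ≤ Υ) (ht : 0 < t) :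
    N2 c Υ t * pf t - N1 c Υ t * (-(9/7) * rf t) < 0 := by
  obtain ⟨hp, hp1, hL0, hL1, hLt, htp, hr⟩ := basics ht
  have hE : 0 < Ef c Υ t := Ef_pos
  have hw1 : w1 Υ t < 0 := w1_neg hΥ ht
  have hid : N2 c Υ t * pf t - N1 c Υ t * (-(9/7) * rf t)
      = c * Ef c Υ t * ((pf t*(2*pf t*w1 Υ t + Lf t*w2 Υ t) - Lf t*w1 Υ t*(-(9/7)*rf t))
        - c*Lf t*pf t*(w1 Υ t)^2) := by
    unfold N1 N2; ring
  have hT : (pf t*(2*pf t*w1 Υ t + Lf t*w2 Υ t) - Lf t*w1 Υ t*(-(9/7)*rf t)) * t^3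
      = -((2*t*(pf t)^2 - 2*Lf t*pf t + 9/7*t*Lf t*rf t)
        + Υ*(-2*(pf t)^3*t^2 + 4*t*Lf t*(pf t)^2 - 2*(Lf t)^2*pf t + 9/7*t*(Lf t)^2*rf t)) := by
    unfold w1 w2 uf
    field_simp
    ring
  have hT0 : (pf t*(2*pf t*w1 Υ t + Lf t*w2 Υ t) - Lf t*w1 Υ t*(-(9/7)*rf t)) ≤ 0 := by
    have hJ0 := J0_nonneg ht
    have hJ1 := J1_nonneg ht
    have ht3 : (0:ℝ) < t^3 := by positivity
    nlinarith [mul_nonneg hΥ hJ1]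
  have hw1sq : 0 < (w1 Υ t)^2 := by nlinarith
  have hsq : 0 < c*Lf t*pf t*(w1 Υ t)^2 := by positivity
  rw [hid]
  apply mul_neg_of_pos_of_neg (mul_pos hc hE)
  linarith

end signs

section signs2
variable {c Υ χ C Pi Pc : ℝ} {t : ℝ}

lemma KD_nonneg (hΥ : 0 ≤ Υ) (hχ0 : 0 ≤ χ) (hC : 0 < C) (hPc : 0 ≤ Pc) (ht : 0 < t) :
    0 ≤ D2 Υ χ C Pi Pc t * pf t - D1 Υ χ C Pi Pc t * (-(9/7) * rf t) := by
  obtain ⟨hp, hp1, hL0, hL1, hLt, htp, hr⟩ := basics ht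
  have hG1 := G1_nonneg (C := C) hχ0 hC hPc ht
  have hu := uf_pos (Υ := Υ) hΥ ht
  have hid : D2 Υ χ C Pi Pc t * pf t - D1 Υ χ C Pi Pc t * (-(9/7) * rf t)
      = 2*Υ*(pf t)^2*G1 χ C Pc t + uf Υ t*(9/7)*rf t*χ*Pc := by
    unfold D1 D2 G1 Gf; ring
  rw [hid]
  have h1 : 0 ≤ 2*Υ*(pf t)^2*G1 χ C Pc t := by positivity
  have h2 : 0 ≤ uf Υ t*(9/7)*rf t*χ*Pc := by positivity
  linarith

lemma hfun_deriv_neg (hc : 0 < c) (hΥ : 0 ≤ Υ) (hχ0 : 0 ≤ χ) (hC : 0 < C)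
    (hPi : 0 < Pi) (hPc : 0 ≤ Pc) (ht : 0 < t) :
    deriv (hfun c Υ χ C Pi Pc) t < 0 := by
  obtain ⟨hp, hp1, hL0, hL1, hLt, htp, hr⟩ := basics ht
  have hD := hd_hfun c Υ χ C Pi Pc (t := t) ht
  rw [hD.deriv]
  have hKN := KN_neg (c := c) (Υ := Υ) hc hΥ ht
  have hKD := KD_nonneg (Υ := Υ) (χ := χ) (C := C) (Pi := Pi) (Pc := Pc) hΥ hχ0 hC hPc ht
  have hDf : 0 < Df Υ χ C Pi Pc t := lt_of_lt_of_le hPi (Df_ge hΥ hχ0 hC hPi hPc ht)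
  have hNf : 0 < Nf c Υ t := Nf_pos hc hΥ ht
  have hnum : (N2 c Υ t * Df Υ χ C Pi Pc t - Nf c Υ t * D2 Υ χ C Pi Pc t) * pf t
      - gfun c Υ χ C Pi Pc t * (-(9/7) * rf t)
      = (N2 c Υ t * pf t - N1 c Υ t * (-(9/7) * rf t)) * Df Υ χ C Pi Pc t
        - Nf c Υ t * (D2 Υ χ C Pi Pc t * pf t - D1 Υ χ C Pi Pc t * (-(9/7) * rf t)) := by
    unfold gfun; ring
  rw [hnum]
  have hnumneg : (N2 c Υ t * pf t - N1 c Υ t * (-(9/7) * rf t)) * Df Υ χ C Pi Pc t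
      - Nf c Υ t * (D2 Υ χ C Pi Pc t * pf t - D1 Υ χ C Pi Pc t * (-(9/7) * rf t)) < 0 := by
    nlinarith [mul_pos hNf (lt_of_lt_of_le hPi (Df_ge hΥ hχ0 hC hPi hPc ht))]
  apply div_neg_of_neg_of_pos hnumneg (by positivity)

lemma hfun_strictAnti (hc : 0 < c) (hΥ : 0 ≤ Υ) (hχ0 : 0 ≤ χ) (hC : 0 < C)
    (hPi : 0 < Pi) (hPc : 0 ≤ Pc) :
    StrictAntiOn (hfun c Υ χ C Pi Pc) (Ioi 0) := by
  apply strictAntiOn_of_deriv_neg (convex_Ioi 0)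
  · intro x hx
    exact ((hd_hfun c Υ χ C Pi Pc hx).continuousAt).continuousWithinAt
  · intro x hx
    rw [interior_Ioi] at hx
    exact hfun_deriv_neg hc hΥ hχ0 hC hPi hPc hx

end signs2

section main
variable {A c Υ χ C Pi Pc lMT : ℝ}

lemma hd_T {lMT : ℝ} {l : ℝ} (hl : 0 < l) :
    HasDerivAt (fun x : ℝ => lMT / x) (-(lMT / l ^ 2)) l := by
  have h := (hasDerivAt_inv (ne_of_gt hl)).const_mul lMT
  have heq : (fun x : ℝ => lMT / x) = (fun x : ℝ => lMT * x⁻¹) := by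
    funext x; rw [div_eq_mul_inv]
  rw [heq]
  refine hda h rfl ?_
  field_simp

lemma T_pos (hMT : 0 < lMT) {l : ℝ} (hl : 0 < l) : 0 < lMT / l := div_pos hMT hl

set_option maxHeartbeats 1000000 in
theorem main_aux (hA : 0 < A) (hc : 0 < c) (hΥ : 0 ≤ Υ) (hχ0 : 0 ≤ χ) (hχ1 : χ ≤ 1)
    (hC : 0 < C) (hPi : 0 < Pi) (hPc : 0 ≤ Pc) (hMT : 0 < lMT)
    (e : ℝ → ℝ)
    (he : ∀ l : ℝ, 0 < l → e l = A * Nf c Υ (lMT/l) / Df Υ χ C Pi Pc (lMT/l)) :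
    ∃ lstar : ℝ, 0 < lstar ∧
      deriv e lstar = 0 ∧
      (∀ l : ℝ, 0 < l → deriv e l = 0 → l = lstar) ∧
      (∀ l : ℝ, 0 < l → l < lstar → 0 < deriv e l) ∧
      (∀ l : ℝ, lstar < l → deriv e l < 0) ∧
      (∀ lmin lmax : ℝ, 0 < lmin → lmin ≤ lmax →
        IsMaxOn e (Icc lmin lmax) (max lmin (min lstar lmax)) ∧
        (∀ l ∈ Icc lmin lmax, IsMaxOn e (Icc lmin lmax) l →
          l = max lmin (min lstar lmax))) := by
  -- abbreviations
  set N : ℝ → ℝ := Nf c Υ with hN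
  set D : ℝ → ℝ := Df Υ χ C Pi Pc with hD
  set H : ℝ → ℝ := hfun c Υ χ C Pi Pc with hH
  have hDpos : ∀ {t : ℝ}, 0 < t → 0 < D t := fun ht =>
    lt_of_lt_of_le hPi (Df_ge hΥ hχ0 hC hPi hPc ht)
  have hNpos : ∀ {t : ℝ}, 0 < t → 0 < N t := fun ht => Nf_pos hc hΥ ht
  -- derivative of e at l > 0
  have hde : ∀ l : ℝ, 0 < l →
      HasDerivAt e ((A * (H (lMT/l) * pf (lMT/l)) / (D (lMT/l))^2) * (-(lMT / l^2))) l := by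
    intro l hl
    have ht : 0 < lMT / l := T_pos hMT hl
    have hF : HasDerivAt (fun t => A * N t / D t)
        (((A * N1 c Υ (lMT/l)) * D (lMT/l) - (A * N (lMT/l)) * D1 Υ χ C Pi Pc (lMT/l))
          / (D (lMT/l))^2) (lMT/l) :=
      (((hd_Nf c Υ ht).const_mul A).div (hd_Df Υ χ C Pi Pc ht) (ne_of_gt (hDpos ht)))
    have hcomp := (hF.comp l (hd_T hl))
    have heq : ∀ᶠ x in nhds l, e x = (fun x => A * N (lMT/x) / D (lMT/x)) x := by
      filter_upwards [Ioi_mem_nhds hl] with x hx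
      exact he x hx
    have h2 := hcomp.congr_of_eventuallyEq heq
    refine hda h2 rfl ?_
    have hpne : pf (lMT/l) ≠ 0 := ne_of_gt (basics ht).1
    have : H (lMT/l) * pf (lMT/l) = gfun c Υ χ C Pi Pc (lMT/l) := by
      rw [hH]; unfold hfun; field_simp
    rw [this]
    unfold gfun
    field_simp
    ring
  -- positivity of e
  have hepos : ∀ l : ℝ, 0 < l → 0 < e l := by
    intro l hl
    have ht : 0 < lMT / l := T_pos hMT hl
    rw [he l hl]
    exact div_pos (mul_pos hA (hNpos ht)) (pow_pos (hDpos ht) 1 |>.trans_le (by simp))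
  -- upper bounds
  have hbound1 : ∀ l : ℝ, 0 < l → e l ≤ A * (lMT/l) / Pi := by
    intro l hl
    have ht : 0 < lMT / l := T_pos hMT hl
    obtain ⟨hp, hp1, hL0, hL1, hLt, htp, hr⟩ := basics ht
    rw [he l hl, div_le_div_iff₀ (hDpos ht) hPi]
    have hNle : N (lMT/l) ≤ lMT/l := by
      have hE0 : 0 < Ef c Υ (lMT/l) := Ef_pos
      have : N (lMT/l) ≤ Lf (lMT/l) := by rw [hN]; unfold Nf; nlinarith
      linarith
    have hDge : Pi ≤ D (lMT/l) := Df_ge hΥ hχ0 hC hPi hPc ht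
    have s1 : A * N (lMT/l) * Pi ≤ A * (lMT/l) * Pi :=
      mul_le_mul_of_nonneg_right (mul_le_mul_of_nonneg_left hNle hA.le) hPi.le
    have s2 : A * (lMT/l) * Pi ≤ A * (lMT/l) * D (lMT/l) :=
      mul_le_mul_of_nonneg_left hDge (by positivity)
    linarith
  have hbound2 : ∀ l : ℝ, 0 < l → e l ≤ A * (c * (1+Υ) / (lMT/l)) / Pi := by
    intro l hl
    have ht : 0 < lMT / l := T_pos hMT hl
    obtain ⟨hp, hp1, hL0, hL1, hLt, htp, hr⟩ := basics ht
    rw [he l hl, div_le_div_iff₀ (hDpos ht) hPi]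
    have hNle : N (lMT/l) ≤ c * (1+Υ) / (lMT/l) := by
      have h1 : 1 - Ef c Υ (lMT/l) ≤ c * wf Υ (lMT/l) := by
        have := Real.one_sub_le_exp_neg (c * wf Υ (lMT/l))
        unfold Ef
        linarith
      have h2 : c * wf Υ (lMT/l) ≤ c * (1+Υ) / (lMT/l) := by
        unfold wf uf
        rw [← mul_div_assoc, div_le_div_iff₀ ht ht]
        have h3 : Υ * Lf (lMT/l) ≤ Υ := by nlinarith
        have h4 : c * (1 + Υ * Lf (lMT/l)) ≤ c * (1 + Υ) := by nlinarith
        exact mul_le_mul_of_nonneg_right h4 ht.le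
      have hE1 : Ef c Υ (lMT/l) < 1 := Ef_lt1 hc hΥ ht
      have : N (lMT/l) ≤ 1 - Ef c Υ (lMT/l) := by rw [hN]; unfold Nf; nlinarith
      linarith
    have hDge : Pi ≤ D (lMT/l) := Df_ge hΥ hχ0 hC hPi hPc ht
    have s1 : A * N (lMT/l) * Pi ≤ A * (c * (1+Υ) / (lMT/l)) * Pi :=
      mul_le_mul_of_nonneg_right (mul_le_mul_of_nonneg_left hNle hA.le) hPi.le
    have s2 : A * (c * (1+Υ) / (lMT/l)) * Pi ≤ A * (c * (1+Υ) / (lMT/l)) * D (lMT/l) := by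
      have hnn : (0:ℝ) ≤ A * (c * (1+Υ) / (lMT/l)) := by positivity
      exact mul_le_mul_of_nonneg_left hDge hnn
    linarith
  -- continuity/differentiability of e on positive reals
  have hcont : ∀ {s : Set ℝ}, s ⊆ Ioi 0 → ContinuousOn e s := by
    intro s hs x hx
    exact ((hde x (hs hx)).continuousAt).continuousWithinAt
  -- existence of a point where H is positive
  have hHpos : ∃ t : ℝ, 0 < t ∧ 0 < H t := by
    by_contra hcon
    push_neg at hcon
    have hmono : MonotoneOn e (Ioi 0) := by
      apply monotoneOn_of_deriv_nonneg (convex_Ioi 0) (hcont (subset_refl _))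
      · intro x hx
        rw [interior_Ioi] at hx
        exact (hde x hx).differentiableAt.differentiableWithinAt
      · intro x hx
        rw [interior_Ioi] at hx
        have hx' : 0 < x := hx
        rw [(hde x hx').deriv]
        have ht : 0 < lMT / x := T_pos hMT hx'
        have h1 : H (lMT/x) ≤ 0 := hcon _ ht
        have h2 : 0 < pf (lMT/x) := (basics ht).1
        have h3 : 0 < D (lMT/x) := hDpos ht
        have hHpf : H (lMT/x) * pf (lMT/x) ≤ 0 := by nlinarith
        have h4 : A * (H (lMT/x) * pf (lMT/x)) / D (lMT/x) ^ 2 ≤ 0 := by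
          apply div_nonpos_of_nonpos_of_nonneg _ (by positivity)
          nlinarith
        have h5 : -(lMT / x^2) ≤ 0 := by
          have : 0 < lMT / x^2 := div_pos hMT (pow_pos hx' 2)
          linarith
        nlinarith
    have he1 : 0 < e 1 := hepos 1 one_pos
    obtain ⟨l1, hl1ge, hkey⟩ : ∃ l1 : ℝ, 1 ≤ l1 ∧ 2*A*lMT ≤ l1*(Pi*e 1) := by
      refine ⟨max 1 (2*A*lMT/(Pi*e 1)), le_max_left _ _, ?_⟩
      have h9 := le_max_right 1 (2*A*lMT/(Pi*e 1))
      rw [div_le_iff₀ (by positivity)] at h9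
      linarith
    have hl1pos : 0 < l1 := lt_of_lt_of_le one_pos hl1ge
    have hmle : e 1 ≤ e l1 := hmono (mem_Ioi.2 one_pos) (mem_Ioi.2 hl1pos) hl1ge
    have hb := hbound1 l1 hl1pos
    have hAl : A * (lMT/l1) / Pi ≤ e 1 / 2 := by
      rw [div_le_div_iff₀ hPi (by norm_num : (0:ℝ) < 2)]
      have h6 : A * (lMT / l1) * 2 * l1 = 2*A*lMT := by field_simp
      have h7 : 0 < l1 * Pi := by positivity
      have h8 : A * (lMT/l1) * 2 ≤ Pi * e 1 := by
        rw [← mul_le_mul_iff_of_pos_right hl1pos, h6]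
        nlinarith
      nlinarith
    linarith
  -- existence of a point where H is negative
  have hHneg : ∃ t : ℝ, 0 < t ∧ H t < 0 := by
    by_contra hcon
    push_neg at hcon
    have hanti : AntitoneOn e (Ioi 0) := by
      apply antitoneOn_of_deriv_nonpos (convex_Ioi 0) (hcont (subset_refl _))
      · intro x hx
        rw [interior_Ioi] at hx
        exact (hde x hx).differentiableAt.differentiableWithinAt
      · intro x hx
        rw [interior_Ioi] at hx
        have hx' : 0 < x := hx
        rw [(hde x hx').deriv]
        have ht : 0 < lMT / x := T_pos hMT hx'
        have h1 : 0 ≤ H (lMT/x) := hcon _ ht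
        have h2 : 0 < pf (lMT/x) := (basics ht).1
        have h3 : 0 < D (lMT/x) := hDpos ht
        have h4 : 0 ≤ A * (H (lMT/x) * pf (lMT/x)) / D (lMT/x) ^ 2 := by
          apply div_nonneg _ (by positivity)
          have : 0 ≤ H (lMT/x) * pf (lMT/x) := mul_nonneg h1 h2.le
          positivity
        have h5 : -(lMT / x^2) ≤ 0 := by
          have : 0 < lMT / x^2 := div_pos hMT (pow_pos hx' 2)
          linarith
        nlinarith
    have he1 : 0 < e 1 := hepos 1 one_pos
    have hcpos : 0 < A*c*(1+Υ) := by positivity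
    obtain ⟨l2, hl2le, hl2pos, hkey⟩ : ∃ l2 : ℝ, l2 ≤ 1 ∧ 0 < l2 ∧
        l2*(2*(A*c*(1+Υ))) ≤ lMT*Pi*e 1 := by
      refine ⟨min 1 (lMT*Pi*e 1/(2*(A*c*(1+Υ)))), min_le_left _ _,
        lt_min one_pos (by positivity), ?_⟩
      have h9 := min_le_right 1 (lMT*Pi*e 1/(2*(A*c*(1+Υ))))
      rw [le_div_iff₀ (by positivity)] at h9
      linarith
    have hmle : e 1 ≤ e l2 := hanti (mem_Ioi.2 hl2pos) (mem_Ioi.2 one_pos) hl2le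
    have hb := hbound2 l2 hl2pos
    have hb' : e l2 ≤ A*c*(1+Υ)*l2/(lMT*Pi) := by
      have heq2 : A * (c * (1+Υ) / (lMT/l2)) / Pi = A*c*(1+Υ)*l2/(lMT*Pi) := by
        field_simp
      rw [heq2] at hb
      exact hb
    have hAl : A*c*(1+Υ)*l2/(lMT*Pi) ≤ e 1 / 2 := by
      rw [div_le_div_iff₀ (by positivity) (by norm_num : (0:ℝ) < 2)]
      nlinarith
    linarith
  obtain ⟨t2, ht2pos, ht2⟩ := hHpos
  obtain ⟨t1, ht1pos, ht1⟩ := hHneg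
  have hanti : StrictAntiOn H (Ioi 0) := by
    rw [hH]
    exact hfun_strictAnti hc hΥ hχ0 hC hPi hPc
  have ht21 : t2 < t1 := by
    by_contra hle
    push_neg at hle
    rcases eq_or_lt_of_le hle with heq | hlt
    · rw [← heq] at ht2; linarith
    · have := hanti (mem_Ioi.2 ht1pos) (mem_Ioi.2 ht2pos) hlt
      linarith
  have hHcont : ContinuousOn H (Icc t2 t1) := by
    intro x hx
    have hxpos : 0 < x := lt_of_lt_of_le ht2pos hx.1
    have := hd_hfun c Υ χ C Pi Pc (t := x) hxpos
    rw [hH]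
    exact this.continuousAt.continuousWithinAt
  have hIVT := intermediate_value_Icc' (le_of_lt ht21) hHcont
  have h0mem : (0:ℝ) ∈ Icc (H t1) (H t2) := ⟨le_of_lt ht1, le_of_lt ht2⟩
  obtain ⟨tstar, htsmem, htszero⟩ := hIVT h0mem
  have htspos : 0 < tstar := lt_of_lt_of_le ht2pos htsmem.1
  have hlstar : 0 < lMT / tstar := div_pos hMT htspos
  have hTls : lMT / (lMT/tstar) = tstar := by
    field_simp
  -- derivative positive before lstar
  have hpos_before : ∀ l : ℝ, 0 < l → l < lMT/tstar → 0 < deriv e l := by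
    intro l hl hlt
    rw [(hde l hl).deriv]
    have ht : 0 < lMT / l := T_pos hMT hl
    have hp : 0 < pf (lMT/l) := (basics ht).1
    have hgt : tstar < lMT/l := by
      rw [lt_div_iff₀ hl]
      have := (lt_div_iff₀ htspos).1 hlt
      nlinarith
    have hHneg : H (lMT/l) < 0 := by
      have := hanti (mem_Ioi.2 htspos) (mem_Ioi.2 ht) hgt
      rw [htszero] at this
      exact this
    apply mul_pos_of_neg_of_neg
    · apply div_neg_of_neg_of_pos _ (pow_pos (hDpos ht) 2)
      exact mul_neg_of_pos_of_neg hA (mul_neg_of_neg_of_pos hHneg hp)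
    · have : 0 < lMT / l^2 := div_pos hMT (pow_pos hl 2)
      linarith
  -- derivative negative after lstar
  have hneg_after : ∀ l : ℝ, lMT/tstar < l → deriv e l < 0 := by
    intro l hlt
    have hl : 0 < l := lt_trans hlstar hlt
    rw [(hde l hl).deriv]
    have ht : 0 < lMT / l := T_pos hMT hl
    have hp : 0 < pf (lMT/l) := (basics ht).1
    have hgt : lMT/l < tstar := by
      rw [div_lt_iff₀ hl]
      have := (div_lt_iff₀ htspos).1 hlt
      nlinarith
    have hHpos : 0 < H (lMT/l) := by
      have := hanti (mem_Ioi.2 ht) (mem_Ioi.2 htspos) hgt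
      rw [htszero] at this
      exact this
    apply mul_neg_of_pos_of_neg
    · apply div_pos _ (pow_pos (hDpos ht) 2)
      exact mul_pos hA (mul_pos hHpos hp)
    · have : 0 < lMT / l^2 := div_pos hMT (pow_pos hl 2)
      linarith
  -- derivative zero at lstar
  have hzero : deriv e (lMT/tstar) = 0 := by
    rw [(hde _ hlstar).deriv, hTls, htszero]
    simp
  -- uniqueness of critical point
  have huniq : ∀ l : ℝ, 0 < l → deriv e l = 0 → l = lMT/tstar := by
    intro l hl hdl
    rw [(hde l hl).deriv] at hdl
    have ht : 0 < lMT / l := T_pos hMT hl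
    have hp : 0 < pf (lMT/l) := (basics ht).1
    have hDp : 0 < D (lMT/l) := hDpos ht
    have hne2 : -(lMT / l^2) ≠ 0 := by
      have : 0 < lMT / l^2 := div_pos hMT (pow_pos hl 2)
      intro hcontra
      linarith [hcontra ▸ this]
    have hH0 : H (lMT/l) = 0 := by
      rcases mul_eq_zero.1 hdl with h | h
      · rcases div_eq_zero_iff.1 h with h' | h'
        · rcases mul_eq_zero.1 h' with h'' | h''
          · exact absurd h'' (ne_of_gt hA)
          · rcases mul_eq_zero.1 h'' with h3 | h3
            · exact h3
            · exact absurd h3 (ne_of_gt hp)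
        · exact absurd h' (by positivity)
      · exact absurd h hne2
    have heqt : lMT/l = tstar := by
      apply hanti.injOn (mem_Ioi.2 ht) (mem_Ioi.2 htspos)
      rw [hH0, htszero]
    rw [eq_div_iff (ne_of_gt htspos)]
    rw [div_eq_iff (ne_of_gt hl)] at heqt
    linarith [heqt]
  -- strict monotonicity pieces
  have SM : StrictMonoOn e (Ioc 0 (lMT/tstar)) := by
    apply strictMonoOn_of_deriv_pos (convex_Ioc _ _)
    · exact hcont (fun x hx => hx.1)
    · intro x hx
      rw [interior_Ioc] at hx
      exact hpos_before x hx.1 hx.2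
  have SA : StrictAntiOn e (Ici (lMT/tstar)) := by
    apply strictAntiOn_of_deriv_neg (convex_Ici _)
    · exact hcont (fun x hx => lt_of_lt_of_le hlstar hx)
    · intro x hx
      rw [interior_Ici] at hx
      exact hneg_after x hx
  refine ⟨lMT / tstar, hlstar, hzero, huniq, hpos_before, hneg_after, ?_⟩
  intro lmin lmax hmin hmax
  set m := max lmin (min (lMT/tstar) lmax) with hm
  have hm_mem : m ∈ Icc lmin lmax :=
    ⟨le_max_left _ _, max_le hmax (min_le_right _ _)⟩
  have hm_pos : 0 < m := lt_of_lt_of_le hmin (le_max_left _ _)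
  have hlt_cases : ∀ l ∈ Icc lmin lmax, l ≠ m → e l < e m := by
    intro l hl hne
    rcases lt_or_gt_of_ne hne with hlm | hml
    · have hmle : m ≤ lMT/tstar := by
        by_contra hgt
        push_neg at hgt
        have hmeq : m = lmin := by
          rcases max_cases lmin (min (lMT/tstar) lmax) with ⟨h1,_⟩|⟨h1,_⟩
          · exact h1
          · exfalso
            have := min_le_left (lMT/tstar) lmax
            rw [← h1] at this
            linarith
        rw [hmeq] at hlm
        linarith [hl.1]
      exact SM ⟨lt_of_lt_of_le hmin hl.1, le_of_lt (lt_of_lt_of_le hlm hmle)⟩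
        ⟨hm_pos, hmle⟩ hlm
    · have hmge : lMT/tstar ≤ m := by
        by_contra hgt
        push_neg at hgt
        have hminlt : min (lMT/tstar) lmax < lMT/tstar :=
          lt_of_le_of_lt (le_trans (le_max_right lmin _) (le_of_eq rfl)) hgt
        have hmineq : min (lMT/tstar) lmax = lmax := by
          rcases min_cases (lMT/tstar) lmax with ⟨h1,_⟩|⟨h1,_⟩
          · rw [h1] at hminlt; exact absurd hminlt (lt_irrefl _)
          · exact h1
        have hmeq : m = lmax := by
          rw [hm, hmineq, max_eq_right hmax]
        rw [hmeq] at hml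
        linarith [hl.2]
      exact SA hmge (le_trans hmge (le_of_lt hml)) hml
  constructor
  · intro x hx
    show e x ≤ e m
    by_cases hxe : x = m
    · rw [hxe]
    · exact le_of_lt (hlt_cases x hx hxe)
  · intro l hl hIsMax
    by_contra hne
    have h1 := hlt_cases l hl hne
    have h2 := hIsMax hm_mem
    simp only [Set.mem_setOf_eq] at h2
    linarith

end main

end EEaux

open EEaux in
/-- Theorem 2 of the paper: for fixed transmit power `P > 0`, the energy
efficiency `λ ↦ EE(P, λ)` is unimodal and strictly pseudo-concave on `(0, ∞)`:
it has a unique stationary point `λ*`, its derivative is positive before `λ*`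
and negative after `λ*`, and for any bounds `0 < λ_min ≤ λ_max` the unique
maximizer over `[λ_min, λ_max]` is `max{λ_min, min{λ*, λ_max}}`. -/
theorem energy_efficiency_unimodal_in_density (α β η Υ lMT A Pc Pi : ℝ)
    (hα : α = 3.5) (hβ : 2 < β) (hη : 0 < η) (hΥ : 0 ≤ Υ) (hMT : 0 < lMT)
    (hA : 0 < A) (hPi : 0 < Pi) (hPcPi : Pi ≤ Pc)
    (L M Mf : ℝ → ℝ)
    (hL : ∀ t : ℝ, L t = 1 - (1 + t / α) ^ (-α))
    (hM : ∀ t : ℝ, M t = t - L t)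
    (hMf : Mf = (fun _ => 0) ∨ Mf = M)
    (Q : ℝ → ℝ → ℝ)
    (hQ : ∀ l P : ℝ, Q l P =
      1 - Real.exp (-(Real.pi * l * (P / η) ^ (2 / β) * (1 + Υ * L (lMT / l)))))
    (EE : ℝ → ℝ → ℝ)
    (hEE : ∀ P l : ℝ, EE P l = A * L (lMT / l) * Q l P /
      ((1 + Υ * L (lMT / l)) *
        (L (lMT / l) * (P + Pc - Pi) + Pi + Mf (lMT / l) * Pc)))
    (P : ℝ) (hP : 0 < P) :
    ∃ lstar : ℝ, 0 < lstar ∧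
      deriv (fun l => EE P l) lstar = 0 ∧
      (∀ l : ℝ, 0 < l → deriv (fun l => EE P l) l = 0 → l = lstar) ∧
      (∀ l : ℝ, 0 < l → l < lstar → 0 < deriv (fun l => EE P l) l) ∧
      (∀ l : ℝ, lstar < l → deriv (fun l => EE P l) l < 0) ∧
      (∀ lmin lmax : ℝ, 0 < lmin → lmin ≤ lmax →
        IsMaxOn (fun l => EE P l) (Icc lmin lmax) (max lmin (min lstar lmax)) ∧
        (∀ l ∈ Icc lmin lmax, IsMaxOn (fun l => EE P l) (Icc lmin lmax) l →
          l = max lmin (min lstar lmax))) := by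
  subst hα
  -- extract χ
  obtain ⟨χ, hχ0, hχ1, hMfeq⟩ : ∃ χ : ℝ, 0 ≤ χ ∧ χ ≤ 1 ∧
      ∀ t : ℝ, Mf t = χ * (t - L t) := by
    rcases hMf with h | h
    · exact ⟨0, le_refl 0, by norm_num, fun t => by rw [h]; simp⟩
    · exact ⟨1, by norm_num, le_refl 1, fun t => by rw [h, hM t]; ring⟩
  have hLf_eq : ∀ t : ℝ, L t = Lf t := by
    intro t
    rw [hL t]
    rfl
  set c : ℝ := Real.pi * (P / η) ^ (2 / β) * lMT with hcdef
  have hc : 0 < c := by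
    have h1 : (0:ℝ) < (P / η) ^ (2 / β) := Real.rpow_pos_of_pos (div_pos hP hη) _
    have := Real.pi_pos
    positivity
  have hC : 0 < P + Pc - Pi := by linarith
  have hPc : (0:ℝ) ≤ Pc := by linarith
  have he : ∀ l : ℝ, 0 < l →
      EE P l = A * Nf c Υ (lMT/l) / Df Υ χ (P + Pc - Pi) Pi Pc (lMT/l) := by
    intro l hl
    have hlne : l ≠ 0 := ne_of_gt hl
    have hMTne : lMT ≠ 0 := ne_of_gt hMT
    have htne : lMT / l ≠ 0 := ne_of_gt (div_pos hMT hl)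
    have harg : Real.pi * l * (P / η) ^ (2 / β) * (1 + Υ * Lf (lMT / l))
        = c * wf Υ (lMT / l) := by
      unfold wf uf
      rw [hcdef]
      field_simp
    rw [hEE P l, hQ l P, hMfeq]
    simp only [hLf_eq]
    rw [harg]
    unfold Nf Df Gf uf Ef
    ring
  exact main_aux hA hc hΥ hχ0 hχ1 hC hPi hPc hMT (fun l => EE P l) he
end

section
/- Let α = 3.5 and fix λ_MT > 0. Let f(λ) = 1 − (1 + λ_MT/(α·λ))^(−α) for λ > 0. Then K(λ) := 2·f'(λ)²/f(λ) − f''(λ) ≥ 0 for every λ > 0 with λ_MT/λ ≤ 2α/(α−1) = 2.8; equivalently, the function λ ↦ 1/f(λ) is convex on {λ > 0 : λ_MT/λ ≤ 2.8}. -/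
open Real Filter Set Topology

private lemma rpow_half_helper (v : ℝ) (hv : 0 < v) (n : ℕ) :
    (v ^ 2 : ℝ) ^ (-(n : ℝ) / 2) = (v ^ n)⁻¹ := by
  rw [← Real.rpow_natCast v 2, ← Real.rpow_mul hv.le, ← Real.rpow_natCast v n,
    ← Real.rpow_neg hv.le]
  congr 1
  ring

private lemma poly_key (v : ℝ) (hv : 1 ≤ v) : 0 ≤ 5*v^9 - 9*v^7 + 9*v^2 - 5 := by
  have h1 : 0 ≤ v - 1 := by linarith
  have h0 : (0:ℝ) ≤ v := by linarith
  have h : 5*v^9 - 9*v^7 + 9*v^2 - 5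
      = (v-1)^3 * (5*v^6+15*v^5+21*v^4+23*v^3+21*v^2+15*v+5) := by ring
  rw [h]
  positivity

section main
variable (lMT : ℝ)

private noncomputable def uu (y : ℝ) : ℝ := 1 + lMT / (3.5 * y)
private noncomputable def ff (y : ℝ) : ℝ := 1 - uu lMT y ^ (-3.5 : ℝ)
private noncomputable def FF (y : ℝ) : ℝ := -(lMT / y ^ 2) * uu lMT y ^ (-3.5 - 1 : ℝ)
private noncomputable def GG (y : ℝ) : ℝ :=
  2 * lMT / y ^ 3 * uu lMT y ^ (-3.5 - 1 : ℝ)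
    - lMT / 3.5 * lMT * (3.5 + 1) / y ^ 4 * uu lMT y ^ (-3.5 - 1 - 1 : ℝ)

variable (hMT : 0 < lMT)
include hMT

private lemma uu_gt_one {x : ℝ} (hx : 0 < x) : 1 < uu lMT x := by
  have : 0 < lMT / (3.5 * x) := by positivity
  simp only [uu]; linarith

private lemma uu_deriv {x : ℝ} (hx : 0 < x) :
    HasDerivAt (uu lMT) (-(lMT / 3.5) / x ^ 2) x := by
  have h := ((hasDerivAt_inv hx.ne').const_mul (lMT / 3.5)).const_add 1
  have heq : (uu lMT) = fun y : ℝ => 1 + lMT / 3.5 * y⁻¹ := by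
    funext y
    rw [uu, div_eq_mul_inv, div_eq_mul_inv, mul_inv, ← mul_assoc, ← div_eq_mul_inv]
  rw [heq]
  convert h using 1
  · rfl
  · rfl
  field_simp

private lemma ff_deriv {x : ℝ} (hx : 0 < x) :
    HasDerivAt (ff lMT) (FF lMT x) x := by
  have hune : uu lMT x ≠ 0 := by
    have := uu_gt_one lMT hMT hx; linarith
  have h := ((uu_deriv lMT hMT hx).rpow_const (p := (-3.5 : ℝ)) (Or.inl hune)).const_sub 1
  have heq : (fun y : ℝ => 1 - uu lMT y ^ (-3.5 : ℝ)) = ff lMT := rfl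
  rw [heq] at h
  convert h using 1
  · rfl
  · rfl
  rw [FF]
  ring

private lemma FF_deriv {x : ℝ} (hx : 0 < x) :
    HasDerivAt (FF lMT) (GG lMT x) x := by
  have hune : uu lMT x ≠ 0 := by
    have := uu_gt_one lMT hMT hx; linarith
  have hA : HasDerivAt (fun y : ℝ => -(lMT / y ^ 2)) (2 * lMT / x ^ 3) x := by
    have h := ((hasDerivAt_pow 2 x).inv (pow_ne_zero 2 hx.ne')).const_mul (-lMT)
    have heq : (fun y : ℝ => -(lMT / y ^ 2)) = fun y : ℝ => -lMT * (y ^ 2)⁻¹ := by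
      funext y; rw [div_eq_mul_inv]; ring
    rw [heq]
    convert h using 1
    · rfl
    · rfl
    · rfl
    field_simp
    ring
  have hB := (uu_deriv lMT hMT hx).rpow_const (p := (-3.5 - 1 : ℝ)) (Or.inl hune)
  have h := hA.mul hB
  convert h using 1
  · rfl
  · rfl
  · rfl
  simp only [GG]
  ring

private lemma ff_pos {x : ℝ} (hx : 0 < x) : 0 < ff lMT x := by
  have hu1 : 1 < uu lMT x := uu_gt_one lMT hMT hx
  have h1 : uu lMT x ^ (-3.5 : ℝ) < 1 := by
    rw [show (1:ℝ) = uu lMT x ^ (0:ℝ) by simp]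
    exact Real.rpow_lt_rpow_left_iff hu1 |>.mpr (by norm_num)
  simp only [ff]; linarith

private lemma KK_nonneg {x : ℝ} (hx : 0 < x) :
    0 ≤ 2 * (FF lMT x) ^ 2 / (ff lMT x) - GG lMT x := by
  have hu1 : 1 < uu lMT x := uu_gt_one lMT hMT hx
  set v := Real.sqrt (uu lMT x) with hv
  have hv2 : v ^ 2 = uu lMT x := Real.sq_sqrt (by linarith)
  have hv0 : 0 ≤ v := Real.sqrt_nonneg _
  have hv1 : 1 < v := by nlinarith
  have e1 : uu lMT x ^ (-3.5 : ℝ) = (v ^ 7)⁻¹ := by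
    rw [← hv2, show (-3.5 : ℝ) = -((7:ℕ):ℝ)/2 by norm_num,
      rpow_half_helper v (by linarith)]
  have e2 : uu lMT x ^ (-3.5 - 1 : ℝ) = (v ^ 9)⁻¹ := by
    rw [← hv2, show (-3.5 - 1 : ℝ) = -((9:ℕ):ℝ)/2 by norm_num,
      rpow_half_helper v (by linarith)]
  have e3 : uu lMT x ^ (-3.5 - 1 - 1 : ℝ) = (v ^ 11)⁻¹ := by
    rw [← hv2, show (-3.5 - 1 - 1 : ℝ) = -((11:ℕ):ℝ)/2 by norm_num,
      rpow_half_helper v (by linarith)]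
  have hL : lMT = 3.5 * x * (v ^ 2 - 1) := by
    have : uu lMT x = 1 + lMT / (3.5 * x) := rfl
    rw [hv2, this]
    field_simp
    ring
  have hv7 : (1:ℝ) < v ^ 7 := one_lt_pow₀ hv1 (by norm_num)
  have hv7ne : v ^ 7 - 1 ≠ 0 := by linarith
  have hfne : 1 - (v ^ 7)⁻¹ ≠ 0 := by
    have : (v ^ 7)⁻¹ < 1 := by
      rw [inv_lt_one_iff₀]; right; exact hv7
    linarith
  have hkey : 2 * (FF lMT x) ^ 2 / (ff lMT x) - GG lMT x
      = 7 * (v ^ 2 - 1) * (5*v^9 - 9*v^7 + 9*v^2 - 5)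
          / (4 * x ^ 2 * v ^ 11 * (v ^ 7 - 1)) := by
    simp only [ff, FF, GG, e1, e2, e3]
    rw [hL]
    have hvne : v ≠ 0 := by linarith
    field_simp
    ring
  rw [hkey]
  apply div_nonneg
  · have := poly_key v hv1.le
    nlinarith
  · have : (0:ℝ) < v := by linarith
    have h7 : (0:ℝ) ≤ v ^ 7 - 1 := by linarith
    positivity

end main

/-- Appendix C of the paper: with `f(λ) = 1 − (1 + λ_MT/(α·λ))^(−α)`, `α = 3.5`,
the quantity `K(λ) = 2·f'(λ)²/f(λ) − f''(λ)` is nonnegative for `λ > 0` with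
`λ_MT/λ ≤ 2α/(α−1) = 2.8`; equivalently, `λ ↦ 1/f(λ)` is convex on that set. -/
theorem reciprocal_load_convexity (α lMT : ℝ) (hα : α = 3.5) (hMT : 0 < lMT)
    (f K : ℝ → ℝ)
    (hf : ∀ l : ℝ, f l = 1 - (1 + lMT / (α * l)) ^ (-α))
    (hK : ∀ l : ℝ, K l = 2 * (deriv f l) ^ 2 / f l - deriv (deriv f) l) :
    (∀ l : ℝ, 0 < l → lMT / l ≤ 2 * α / (α - 1) → 0 ≤ K l) ∧
    ConvexOn ℝ {l : ℝ | 0 < l ∧ lMT / l ≤ 2 * α / (α - 1)} (fun l => 1 / f l) := by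
  subst hα
  have hfeq : f = ff lMT := funext fun l => by rw [hf l]; rfl
  subst hfeq
  have hKd : ∀ l : ℝ, 0 < l →
      K l = 2 * (FF lMT l) ^ 2 / (ff lMT l) - GG lMT l := by
    intro l hl
    rw [hK l]
    have hev : deriv (ff lMT) =ᶠ[nhds l] FF lMT :=
      eventually_of_mem (Ioi_mem_nhds hl) (fun x hx => (ff_deriv lMT hMT hx).deriv)
    rw [(ff_deriv lMT hMT hl).deriv, hev.deriv_eq, (FF_deriv lMT hMT hl).deriv]
  have hb : (0:ℝ) < lMT / 2.8 := by positivity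
  constructor
  · intro l hl _
    rw [hKd l hl]
    exact KK_nonneg lMT hMT hl
  · have hset : {l : ℝ | 0 < l ∧ lMT / l ≤ 2 * 3.5 / (3.5 - 1)} = Ici (lMT / 2.8) := by
      ext x
      simp only [mem_setOf_eq, mem_Ici]
      constructor
      · rintro ⟨hx, hle⟩
        rw [div_le_iff₀ hx] at hle
        rw [div_le_iff₀ (by norm_num : (0:ℝ) < 2.8)]
        norm_num at hle ⊢
        linarith
      · intro hxge
        have hx : 0 < x := lt_of_lt_of_le hb hxge
        refine ⟨hx, ?_⟩
        rw [div_le_iff₀ (by norm_num : (0:ℝ) < 2.8)] at hxge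
        rw [div_le_iff₀ hx]
        norm_num at hxge ⊢
        linarith
    rw [hset]
    have hmem : ∀ x : ℝ, x ∈ interior (Ici (lMT / 2.8)) → 0 < x := by
      intro x hx
      rw [interior_Ici] at hx
      exact lt_trans hb hx
    apply convexOn_of_hasDerivWithinAt2_nonneg (convex_Ici _)
      (f' := fun x => -FF lMT x / (ff lMT x) ^ 2)
      (f'' := fun x => (2 * (FF lMT x) ^ 2 - GG lMT x * ff lMT x) / (ff lMT x) ^ 3)
    · exact ContinuousOn.div continuousOn_const
        (fun x hx => ((ff_deriv lMT hMT (lt_of_lt_of_le hb hx)).continuousAt).continuousWithinAt)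
        (fun x hx => (ff_pos lMT hMT (lt_of_lt_of_le hb hx)).ne')
    · intro x hx
      have hx0 := hmem x hx
      have hdg : HasDerivAt (fun y => 1 / ff lMT y) (-FF lMT x / (ff lMT x) ^ 2) x := by
        have h := (hasDerivAt_const x (1:ℝ)).div (ff_deriv lMT hMT hx0)
          (ff_pos lMT hMT hx0).ne'
        convert h using 1
        · rfl
        · rfl
        · rfl
        ring
      exact hdg.hasDerivWithinAt
    · intro x hx
      have hx0 := hmem x hx
      have hfne := (ff_pos lMT hMT hx0).ne'
      have hnum : HasDerivAt (fun y => -FF lMT y) (-GG lMT x) x := (FF_deriv lMT hMT hx0).neg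
      have hden : HasDerivAt (fun y => (ff lMT y) ^ 2)
          ((2:ℕ) * ff lMT x ^ 1 * FF lMT x) x := (ff_deriv lMT hMT hx0).pow 2
      have hdg := hnum.div hden (pow_ne_zero 2 hfne)
      have : HasDerivAt (fun y => -FF lMT y / (ff lMT y) ^ 2)
          ((2 * (FF lMT x) ^ 2 - GG lMT x * ff lMT x) / (ff lMT x) ^ 3) x := by
        convert hdg using 1
        · rfl
        · rfl
        · rfl
        field_simp
        ring
      exact this.hasDerivWithinAt
    · intro x hx
      have hx0 := hmem x hx
      have hfp := ff_pos lMT hMT hx0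
      have hrw : (2 * (FF lMT x) ^ 2 - GG lMT x * ff lMT x) / (ff lMT x) ^ 3
          = (2 * (FF lMT x) ^ 2 / (ff lMT x) - GG lMT x) / (ff lMT x) ^ 2 := by
        field_simp
      rw [hrw]
      exact div_nonneg (KK_nonneg lMT hMT hx0) (by positivity)
end

section
/- Let α = 3.5 and t > 0. For each integer u ≥ 0 define f(u) = α^(α+1)·Γ(u + α + 1)·t^u / (Γ(α+1)·Γ(u+1)·(α + t)^(u + α + 1)). Then the series Σ_{u=0}^{∞} f(u)/(u+1) converges and equals (1/t)·(1 − (1 + t/α)^(−α)), i.e. Σ_{u=0}^{∞} f(u)/(u+1) = L(t)/t where L(t) = 1 − (1 + t/α)^(−α). -/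
open Real Filter Set Topology


/-- iterated derivative formula for `z ↦ (1-z)^(-a)` on the unit ball. -/
lemma iteratedDeriv_one_sub_cpow (a : ℂ) (n : ℕ) :
    Set.EqOn (iteratedDeriv n (fun z : ℂ => (1 - z) ^ (-a)))
      (fun z => (∏ j ∈ Finset.range n, (a + j)) * (1 - z) ^ (-a - n))
      (Metric.ball (0 : ℂ) 1) := by
  have hslit : ∀ z ∈ Metric.ball (0 : ℂ) 1, (1 - z) ∈ Complex.slitPlane := by
    intro z hz
    rw [Metric.mem_ball, dist_zero_right] at hz
    exact Or.inl (by
      simp only [Complex.sub_re, Complex.one_re]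
      have := Complex.re_le_norm z
      have : z.re < 1 := lt_of_le_of_lt (le_trans this (le_of_eq rfl)) hz
      linarith)
  induction n with
  | zero =>
    intro z _
    simp [iteratedDeriv_zero]
  | succ n ih =>
    intro z hz
    rw [iteratedDeriv_succ]
    have heq : iteratedDeriv n (fun z : ℂ => (1 - z) ^ (-a)) =ᶠ[nhds z]
        (fun z => (∏ j ∈ Finset.range n, (a + j)) * (1 - z) ^ (-a - n)) :=
      Filter.eventuallyEq_of_mem (Metric.isOpen_ball.mem_nhds hz) ih
    rw [heq.deriv_eq]
    have hd : HasDerivAt (fun z : ℂ => (∏ j ∈ Finset.range n, (a + j)) * (1 - z) ^ (-a - n))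
        ((∏ j ∈ Finset.range n, (a + j)) * ((-a - n) * (1 - z) ^ (-a - n - 1) * (-1))) z := by
      exact (((hasDerivAt_id z).const_sub 1).cpow_const (hslit z hz)).const_mul _
    rw [hd.deriv]
    rw [Finset.prod_range_succ]
    push_cast
    ring_nf

/-- Generalized binomial series, complex version. -/
lemma hasSum_binomial_cpow (a : ℂ) (x : ℂ) (hx : ‖x‖ < 1) :
    HasSum (fun n : ℕ => (∏ j ∈ Finset.range n, (a + j)) * x ^ n / (n.factorial : ℂ))
      ((1 - x) ^ (-a)) := by
  have hdiff : DifferentiableOn ℂ (fun z : ℂ => (1 - z) ^ (-a)) (Metric.ball 0 1) := by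
    intro z hz
    rw [Metric.mem_ball, dist_zero_right] at hz
    have hslit : (1 - z) ∈ Complex.slitPlane := by
      refine Or.inl ?_
      simp only [Complex.sub_re, Complex.one_re]
      have h1 : z.re ≤ ‖z‖ := Complex.re_le_norm z
      linarith
    exact (((hasDerivAt_id z).const_sub 1).cpow_const hslit).differentiableAt.differentiableWithinAt
  have hz : x ∈ Metric.ball (0 : ℂ) 1 := by simpa [Metric.mem_ball, dist_zero_right] using hx
  have H := Complex.hasSum_taylorSeries_on_ball hdiff hz
  have h0 : (0 : ℂ) ∈ Metric.ball (0 : ℂ) 1 := by simp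
  have key : ∀ n : ℕ, (n.factorial : ℂ)⁻¹ • (x - 0) ^ n • iteratedDeriv n
      (fun z : ℂ => (1 - z) ^ (-a)) 0 = (∏ j ∈ Finset.range n, (a + j)) * x ^ n / (n.factorial : ℂ) := by
    intro n
    rw [iteratedDeriv_one_sub_cpow a n h0]
    simp only [smul_eq_mul, sub_zero, Complex.one_cpow]
    ring
  have : (fun n : ℕ => (∏ j ∈ Finset.range n, (a + j)) * x ^ n / (n.factorial : ℂ)) =
      fun n : ℕ => (n.factorial : ℂ)⁻¹ • (x - 0) ^ n • iteratedDeriv n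
        (fun z : ℂ => (1 - z) ^ (-a)) 0 := funext fun n => (key n).symm
  rw [this]
  exact H

/-- Generalized binomial series, real version. -/
lemma hasSum_binomial_rpow (a : ℝ) (x : ℝ) (hx0 : 0 ≤ x) (hx1 : x < 1) :
    HasSum (fun n : ℕ => (∏ j ∈ Finset.range n, (a + j)) * x ^ n / (n.factorial : ℝ))
      ((1 - x) ^ (-a)) := by
  rw [← Complex.hasSum_ofReal]
  have hnorm : ‖(x : ℂ)‖ < 1 := by
    rw [Complex.norm_real, Real.norm_eq_abs, abs_of_nonneg hx0]
    exact hx1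
  have H := hasSum_binomial_cpow (a : ℂ) (x : ℂ) hnorm
  have h1x : ((1 - x : ℝ) : ℂ) = 1 - (x : ℂ) := by push_cast; ring
  have hr : (((1 - x) ^ (-a) : ℝ) : ℂ) = (1 - (x : ℂ)) ^ (-(a : ℂ)) := by
    rw [Complex.ofReal_cpow (by linarith) (-a)]
    push_cast
    ring_nf
  rw [hr]
  have key : (fun n : ℕ => ((((∏ j ∈ Finset.range n, (a + j)) * x ^ n / (n.factorial : ℝ)) : ℝ) : ℂ))
      = fun n : ℕ => (∏ j ∈ Finset.range n, ((a : ℂ) + j)) * (x : ℂ) ^ n / (n.factorial : ℂ) := by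
    funext n
    push_cast
    ring
  rw [key]
  exact H

lemma Gamma_add_nat_prod (a : ℝ) (ha : 0 < a) (n : ℕ) :
    Real.Gamma (a + n) = Real.Gamma a * ∏ j ∈ Finset.range n, (a + j) := by
  induction n with
  | zero => simp
  | succ n ih =>
    have hne : a + (n : ℝ) ≠ 0 := by positivity
    have : a + ((n : ℕ) + 1 : ℕ) = (a + n) + 1 := by push_cast; ring
    rw [this, Real.Gamma_add_one hne, ih, Finset.prod_range_succ]
    ring

/-- Appendix A of the paper: the series identity
`Σ_{u≥0} f(u)/(u+1) = L(t)/t`, where `f(u)` is the (approximate) probability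
mass function of the number of other mobile terminals in the Voronoi cell of
the typical mobile terminal, `t = λ_MT/λ_BS > 0`, `α = 3.5`, and
`L(t) = 1 − (1 + t/α)^(−α)`. -/
theorem cell_load_series_identity (α t : ℝ) (hα : α = 3.5) (ht : 0 < t)
    (f : ℕ → ℝ)
    (hf : ∀ u : ℕ, f u = α ^ (α + 1) * Real.Gamma ((u : ℝ) + α + 1) * t ^ u /
      (Real.Gamma (α + 1) * Real.Gamma ((u : ℝ) + 1) *
        (α + t) ^ ((u : ℝ) + α + 1))) :
    HasSum (fun u : ℕ => f u / ((u : ℝ) + 1)) ((1 - (1 + t / α) ^ (-α)) / t) := by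
  have hα0 : 0 < α := by rw [hα]; norm_num
  have hαt : 0 < α + t := by linarith
  set x : ℝ := t / (α + t) with hxdef
  have hx0 : 0 ≤ x := by positivity
  have hx1 : x < 1 := by
    rw [hxdef, div_lt_one hαt]; linarith
  set g : ℕ → ℝ := fun n => (∏ j ∈ Finset.range n, (α + j)) * x ^ n / (n.factorial : ℝ)
    with hgdef
  have h1 : HasSum g ((1 - x) ^ (-α)) := hasSum_binomial_rpow α x hx0 hx1
  have hg0 : ∑ i ∈ Finset.range 1, g i = 1 := by simp [hgdef]
  have h2 : HasSum (fun u : ℕ => g (u + 1)) ((1 - x) ^ (-α) - 1) := by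
    have := (hasSum_nat_add_iff' (f := g) 1).mpr h1
    rwa [hg0] at this
  set C : ℝ := α ^ α / (t * (α + t) ^ α) with hCdef
  have h3 : HasSum (fun u : ℕ => C * g (u + 1)) (C * ((1 - x) ^ (-α) - 1)) := h2.mul_left C
  -- positivity facts
  have hA : (0:ℝ) < α ^ α := Real.rpow_pos_of_pos hα0 α
  have hB : (0:ℝ) < (α + t) ^ α := Real.rpow_pos_of_pos hαt α
  have hΓ : 0 < Real.Gamma α := Real.Gamma_pos_of_pos hα0
  -- pointwise equality
  have hfun : (fun u : ℕ => f u / ((u : ℝ) + 1)) = fun u : ℕ => C * g (u + 1) := by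
    funext u
    rw [hf u]
    have e1 : (u : ℝ) + α + 1 = α + ((u + 1 : ℕ) : ℝ) := by push_cast; ring
    have e2 : Real.Gamma ((u : ℝ) + α + 1)
        = Real.Gamma α * ∏ j ∈ Finset.range (u + 1), (α + j) := by
      rw [e1, Gamma_add_nat_prod α hα0 (u + 1)]
    have e3 : Real.Gamma ((u : ℝ) + 1) = (u.factorial : ℝ) := Real.Gamma_nat_eq_factorial u
    have e4 : Real.Gamma (α + 1) = α * Real.Gamma α := Real.Gamma_add_one (ne_of_gt hα0)
    have e5 : α ^ (α + 1) = α ^ α * α := Real.rpow_add_one (ne_of_gt hα0) α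
    have e6 : (α + t) ^ ((u : ℝ) + α + 1)
        = (α + t) ^ u * ((α + t) ^ α * (α + t)) := by
      rw [show (u : ℝ) + α + 1 = (u : ℝ) + (α + 1) by ring, Real.rpow_add hαt,
        Real.rpow_natCast, Real.rpow_add_one (ne_of_gt hαt)]
    rw [e2, e3, e4, e5, e6, hgdef, hCdef]
    simp only [hxdef, div_pow, Nat.factorial_succ]
    have hu : (0:ℝ) < (u.factorial : ℝ) := by positivity
    have hpu : (0:ℝ) < (α + t) ^ u := by positivity
    push_cast
    field_simp
    ring
  -- value equality
  have hval : C * ((1 - x) ^ (-α) - 1) = (1 - (1 + t / α) ^ (-α)) / t := by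
    have e7 : 1 - x = α / (α + t) := by
      rw [hxdef]; field_simp
      ring
    have e8 : (1 : ℝ) + t / α = (α + t) / α := by field_simp
    have e9 : (1 - x) ^ (-α) = (α + t) ^ α / α ^ α := by
      rw [e7, Real.rpow_neg (by positivity), Real.div_rpow hα0.le hαt.le,
        inv_div]
    have e10 : ((1 : ℝ) + t / α) ^ (-α) = α ^ α / (α + t) ^ α := by
      rw [e8, Real.rpow_neg (by positivity), Real.div_rpow hαt.le hα0.le, inv_div]
    rw [e9, e10, hCdef]
    field_simp
  rw [hfun, ← hval]
  exact h3
end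

section
/- Let α = 3.5, β > 2, a > 0, Υ ≥ 0 and λ_MT > 0. Let f(λ) = 1 − (1 + λ_MT/(α·λ))^(−α) and h(λ) = 1 − exp(−a·λ·(1 + Υ·f(λ))) for λ > 0. Then the function W₁(λ) = −(f(λ)/f'(λ))·(h'(λ)/h(λ)) is nonnegative and nonincreasing on the set {λ > 0 : λ_MT/λ ≥ 2α/(α−1) = 2.8}. -/
/-!
Write `t = λ_MT/λ`, which decreases in `λ`. Then `-f/f' = λ_MT · L(t)/(t² L'(t))
= λ_MT ((1 + t/α)^(α+1) - (1 + t/α))/t²`, whose `t`-derivative has the sign of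
`(1 + t/α)^α ((α-1)t/α - 2) + t/α + 2`, nonnegative once `t ≥ 2α/(α-1)`.

With `g(λ) = aλ(1 + Υ f(λ))` one has `h = 1 - e^(-g)` and `h'/h = g'/(e^g - 1)`, where
`g' = a(1 + Υ (L(t) - t L'(t)))`. The tangent intercept `L - t L'` has derivative `-t L'' ≥ 0`
and vanishes at `0`, so `g' ≥ a` decreases in `λ` while `g > 0` increases. Both factors of `W₁`
are therefore nonnegative and nonincreasing, hence so is their product.
-/

open Real Set

noncomputable def load (α t : ℝ) : ℝ := 1 - (1 + t / α) ^ (-α)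

noncomputable def loadDeriv (α t : ℝ) : ℝ := (1 + t / α) ^ (-(α + 1))

noncomputable def loadIntercept (α t : ℝ) : ℝ := load α t - t * loadDeriv α t

/-- `L(t)/(t² L'(t))`: the factor `-f/f'` of `W₁` divided by `λ_MT`. -/
noncomputable def loadRatio (α t : ℝ) : ℝ := ((1 + t / α) ^ (α + 1) - (1 + t / α)) / t ^ 2

section Load

variable {α t : ℝ}

lemma hasDerivAt_one_add_div_rpow (p : ℝ) (hw : 0 < 1 + t / α) :
    HasDerivAt (fun s => (1 + s / α) ^ p) (p / α * (1 + t / α) ^ (p - 1)) t :=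
  ((((hasDerivAt_id' t).div_const α).const_add 1).rpow_const (Or.inl hw.ne')).congr_deriv
    (by ring)

lemma hasDerivAt_load (hα : α ≠ 0) (hw : 0 < 1 + t / α) :
    HasDerivAt (load α) (loadDeriv α t) t :=
  ((hasDerivAt_one_add_div_rpow (-α) hw).const_sub 1).congr_deriv <| by
    rw [loadDeriv, neg_div, div_self hα]; ring_nf

lemma hasDerivAt_loadDeriv (hw : 0 < 1 + t / α) :
    HasDerivAt (loadDeriv α) (-((α + 1) / α) * (1 + t / α) ^ (-(α + 2))) t :=
  (hasDerivAt_one_add_div_rpow (-(α + 1)) hw).congr_deriv <| by ring_nf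

lemma hasDerivAt_loadIntercept (hα : α ≠ 0) (hw : 0 < 1 + t / α) :
    HasDerivAt (loadIntercept α) ((α + 1) / α * t * (1 + t / α) ^ (-(α + 2))) t :=
  ((hasDerivAt_load hα hw).sub ((hasDerivAt_id' t).mul (hasDerivAt_loadDeriv hw))).congr_deriv
    (by ring)

lemma loadDeriv_mul_sub (hw : 0 < 1 + t / α) :
    loadDeriv α t * ((1 + t / α) ^ (α + 1) - (1 + t / α)) = load α t := by
  rw [loadDeriv, load, mul_sub, ← rpow_add hw, neg_add_cancel, rpow_zero]
  nth_rewrite 2 [← rpow_one (1 + t / α)]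
  rw [← rpow_add hw]; ring_nf

lemma hasDerivAt_loadRatio (hα : α ≠ 0) (hw : 0 < 1 + t / α) (ht : t ≠ 0) :
    HasDerivAt (loadRatio α)
      (((1 + t / α) ^ α * ((α - 1) / α * t - 2) + t / α + 2) / t ^ 3) t := by
  have hnum := (hasDerivAt_one_add_div_rpow (α + 1) hw).sub
    (((hasDerivAt_id' t).div_const α).const_add 1)
  refine (hnum.div (hasDerivAt_pow 2 t) (pow_ne_zero 2 ht)).congr_deriv ?_
  have hsplit : (1 + t / α) ^ (α + 1) = (1 + t / α) * (1 + t / α) ^ α := by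
    rw [rpow_add hw, rpow_one, mul_comm]
  simp only [Pi.sub_apply, hsplit, add_sub_cancel_right]
  field_simp
  ring

lemma monotoneOn_loadIntercept (hα : 0 < α) : MonotoneOn (loadIntercept α) (Ici 0) := by
  have hderiv : ∀ t ∈ Ici (0 : ℝ), HasDerivAt (loadIntercept α)
      ((α + 1) / α * t * (1 + t / α) ^ (-(α + 2))) t := fun t ht =>
    hasDerivAt_loadIntercept hα.ne' (by have : (0 : ℝ) ≤ t := ht; positivity)
  refine monotoneOn_of_hasDerivWithinAt_nonneg (convex_Ici 0)
    (fun t ht => (hderiv t ht).continuousAt.continuousWithinAt)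
    (fun t ht => (hderiv t (interior_subset ht)).hasDerivWithinAt) fun t ht => ?_
  rw [interior_Ici] at ht
  have : (0 : ℝ) < t := ht
  positivity

lemma loadIntercept_nonneg (hα : 0 < α) (ht : 0 ≤ t) : 0 ≤ loadIntercept α t := by
  have h0 : loadIntercept α 0 = 0 := by simp [loadIntercept, load]
  simpa [h0] using monotoneOn_loadIntercept hα self_mem_Ici ht ht

lemma load_nonneg (hα : 0 < α) (ht : 0 ≤ t) : 0 ≤ load α t := by
  have : (1 + t / α) ^ (-α) ≤ 1 :=
    rpow_le_one_of_one_le_of_nonpos (by simp only [le_add_iff_nonneg_right]; positivity)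
      (by linarith)
  rw [load]; linarith

lemma loadRatio_nonneg (hα : 0 < α) (ht : 0 ≤ t) : 0 ≤ loadRatio α t := by
  have hw : 1 ≤ 1 + t / α := by simp only [le_add_iff_nonneg_right]; positivity
  have := self_le_rpow_of_one_le hw (by linarith : 1 ≤ α + 1)
  rw [loadRatio]
  exact div_nonneg (by linarith) (sq_nonneg t)

lemma monotoneOn_loadRatio (hα : 1 < α) : MonotoneOn (loadRatio α) (Ici (2 * α / (α - 1))) := by
  have hα0 : 0 < α := by linarith
  have hpos : ∀ t ∈ Ici (2 * α / (α - 1)), 0 < t := fun t ht =>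
    lt_of_lt_of_le (div_pos (by linarith) (by linarith)) ht
  have hderiv : ∀ t ∈ Ici (2 * α / (α - 1)), HasDerivAt (loadRatio α)
      (((1 + t / α) ^ α * ((α - 1) / α * t - 2) + t / α + 2) / t ^ 3) t := fun t ht =>
    have := hpos t ht
    hasDerivAt_loadRatio hα0.ne' (by positivity) this.ne'
  refine monotoneOn_of_hasDerivWithinAt_nonneg (convex_Ici _)
    (fun t ht => (hderiv t ht).continuousAt.continuousWithinAt)
    (fun t ht => (hderiv t (interior_subset ht)).hasDerivWithinAt) fun t ht => ?_
  have ht0 := hpos t (interior_subset ht)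
  rw [interior_Ici] at ht
  have hgap : 0 ≤ (α - 1) / α * t - 2 := by
    rw [mem_Ioi, div_lt_iff₀ (by linarith)] at ht
    rw [div_mul_eq_mul_div, sub_nonneg, le_div_iff₀ hα0]
    linarith
  have : 0 ≤ (1 + t / α) ^ α * ((α - 1) / α * t - 2) := mul_nonneg (by positivity) hgap
  positivity

end Load

lemma AntitoneOn.mul_of_nonneg {s : Set ℝ} {u v : ℝ → ℝ} (hu : AntitoneOn u s)
    (hv : AntitoneOn v s) (hu₀ : ∀ x ∈ s, 0 ≤ u x) (hv₀ : ∀ x ∈ s, 0 ≤ v x) :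
    AntitoneOn (fun x => u x * v x) s :=
  fun _ hx _ hy hxy => mul_le_mul (hu hx hy hxy) (hv hx hy hxy) (hv₀ _ hy) (hu₀ _ hx)

lemma AntitoneOn.div_exp_sub_one {s : Set ℝ} {g g' : ℝ → ℝ} (hg' : AntitoneOn g' s)
    (hg : MonotoneOn g s) (hg'₀ : ∀ x ∈ s, 0 ≤ g' x) (hg₀ : ∀ x ∈ s, 0 < g x) :
    AntitoneOn (fun x => g' x / (exp (g x) - 1)) s := fun x hx y hy hxy =>
  div_le_div₀ (hg'₀ x hx) (hg' hx hy hxy) (by linarith [add_one_lt_exp (hg₀ x hx).ne', hg₀ x hx])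
    (by linarith [exp_le_exp.2 (hg hx hy hxy)])

lemma HasDerivAt.logDeriv_one_sub_exp_neg {g : ℝ → ℝ} {g' x : ℝ} (hg : HasDerivAt g g' x) :
    logDeriv (fun y => 1 - Real.exp (-g y)) x = g' / (Real.exp (g x) - 1) := by
  have hfactor : 1 - Real.exp (-g x) = (Real.exp (g x) - 1) * Real.exp (-g x) := by
    rw [sub_mul, ← exp_add, add_neg_cancel, exp_zero, one_mul]
  have hd : HasDerivAt (fun y => 1 - Real.exp (-g y)) (g' * Real.exp (-g x)) x :=
    ((hg.neg.exp).const_sub 1).congr_deriv (by rw [Pi.neg_apply]; ring)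
  rw [logDeriv_apply, hd.deriv, hfactor, mul_div_mul_right _ _ (exp_ne_zero _)]

lemma antitoneOn_const_div {c : ℝ} (hc : 0 ≤ c) : AntitoneOn (fun l => c / l) (Ioi 0) :=
  fun _ hx _ _ hxy => div_le_div_of_nonneg_left hc hx hxy

noncomputable def detectionExponent (a Υ α c l : ℝ) : ℝ := a * l * (1 + Υ * load α (c / l))

noncomputable def detectionLogDeriv (a Υ α c l : ℝ) : ℝ :=
  a * (1 + Υ * loadIntercept α (c / l)) / (Real.exp (detectionExponent a Υ α c l) - 1)

section Density

variable {a Υ α c l : ℝ}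

lemma hasDerivAt_load_const_div (hα : 0 < α) (hc : 0 ≤ c) (hl : 0 < l) :
    HasDerivAt (fun x => load α (c / x)) (-(c / l ^ 2) * loadDeriv α (c / l)) l := by
  have hinv : HasDerivAt (fun x => c / x) (-(c / l ^ 2)) l :=
    ((hasDerivAt_const l c).div (hasDerivAt_id' l) hl.ne').congr_deriv (by ring)
  refine ((hasDerivAt_load hα.ne' (by positivity)).comp l hinv).congr_deriv ?_
  ring

lemma neg_load_div_deriv (hα : 0 < α) (hc : 0 < c) (hl : 0 < l) :
    -(load α (c / l) / (-(c / l ^ 2) * loadDeriv α (c / l))) = c * loadRatio α (c / l) := by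
  have hw : 0 < 1 + c / l / α := by positivity
  have hd : 0 < loadDeriv α (c / l) := rpow_pos_of_pos hw _
  rw [← loadDeriv_mul_sub hw, loadRatio]
  field_simp

lemma hasDerivAt_detectionExponent (hα : 0 < α) (hc : 0 ≤ c) (hl : 0 < l) :
    HasDerivAt (detectionExponent a Υ α c) (a * (1 + Υ * loadIntercept α (c / l))) l := by
  have hlin : HasDerivAt (fun x => a * x) a l := by simpa using (hasDerivAt_id' l).const_mul a
  refine (hlin.mul (((hasDerivAt_load_const_div hα hc hl).const_mul Υ).const_add 1)).congr_deriv ?_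
  rw [loadIntercept]
  field_simp
  ring

lemma monotoneOn_detectionExponent (ha : 0 ≤ a) (hΥ : 0 ≤ Υ) (hα : 0 < α) (hc : 0 ≤ c) :
    MonotoneOn (detectionExponent a Υ α c) (Ioi 0) := by
  refine monotoneOn_of_hasDerivWithinAt_nonneg (convex_Ioi 0)
    (fun l hl => (hasDerivAt_detectionExponent hα hc hl).continuousAt.continuousWithinAt)
    (fun l hl => (hasDerivAt_detectionExponent hα hc (interior_subset hl)).hasDerivWithinAt)
    fun l hl => ?_
  have hl₀ : 0 < l := interior_subset hl
  have := loadIntercept_nonneg hα (div_nonneg hc hl₀.le)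
  positivity

lemma detectionExponent_pos (ha : 0 < a) (hΥ : 0 ≤ Υ) (hα : 0 < α) (hc : 0 ≤ c) (hl : 0 < l) :
    0 < detectionExponent a Υ α c l := by
  have := load_nonneg hα (div_nonneg hc hl.le)
  rw [detectionExponent]
  positivity

lemma antitoneOn_mul_loadRatio_const_div (hα : 1 < α) (hc : 0 ≤ c) :
    AntitoneOn (fun l => c * loadRatio α (c / l)) {l | 0 < l ∧ 2 * α / (α - 1) ≤ c / l} :=
  fun _ hx _ hy hxy => mul_le_mul_of_nonneg_left
    ((monotoneOn_loadRatio hα).comp_AntitoneOn ((antitoneOn_const_div hc).mono fun _ hl => hl.1)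
      (fun _ hl => hl.2) hx hy hxy) hc

lemma logDeriv_detection (hα : 0 < α) (hc : 0 ≤ c) (hl : 0 < l) :
    logDeriv (fun x => 1 - Real.exp (-detectionExponent a Υ α c x)) l =
      detectionLogDeriv a Υ α c l :=
  (hasDerivAt_detectionExponent hα hc hl).logDeriv_one_sub_exp_neg

lemma detectionLogDeriv_nonneg (ha : 0 < a) (hΥ : 0 ≤ Υ) (hα : 0 < α) (hc : 0 ≤ c)
    (hl : 0 < l) : 0 ≤ detectionLogDeriv a Υ α c l := by
  have hI := loadIntercept_nonneg hα (div_nonneg hc hl.le)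
  have hg₀ := detectionExponent_pos ha hΥ hα hc hl
  have hg := add_one_lt_exp hg₀.ne'
  exact div_nonneg (by positivity) (by linarith)

lemma antitoneOn_detectionLogDeriv (ha : 0 < a) (hΥ : 0 ≤ Υ) (hα : 0 < α) (hc : 0 ≤ c) :
    AntitoneOn (detectionLogDeriv a Υ α c) (Ioi 0) := by
  have hI : AntitoneOn (fun l => loadIntercept α (c / l)) (Ioi 0) :=
    (monotoneOn_loadIntercept hα).comp_AntitoneOn (antitoneOn_const_div hc)
      fun _ hl => div_nonneg hc (le_of_lt hl)
  refine AntitoneOn.div_exp_sub_one (fun x hx y hy hxy => ?_)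
    (monotoneOn_detectionExponent ha.le hΥ hα hc) (fun l hl => ?_)
    fun _ hl => detectionExponent_pos ha hΥ hα hc hl
  · have := hI hx hy hxy
    gcongr
  · have := loadIntercept_nonneg hα (div_nonneg hc (le_of_lt hl))
    positivity

end Density

theorem stationary_density_first_term_antitone_general (α a Υ lMT : ℝ)
    (hα : α = 3.5) (ha : 0 < a) (hΥ : 0 ≤ Υ) (hMT : 0 < lMT)
    (f h W₁ : ℝ → ℝ)
    (hf : ∀ l : ℝ, f l = 1 - (1 + lMT / (α * l)) ^ (-α))
    (hh : ∀ l : ℝ, h l = 1 - Real.exp (-(a * l * (1 + Υ * f l))))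
    (hW : ∀ l : ℝ, W₁ l = -(f l / deriv f l) * (deriv h l / h l)) :
    (∀ l : ℝ, 0 < l → 2 * α / (α - 1) ≤ lMT / l → 0 ≤ W₁ l) ∧
    AntitoneOn W₁ {l : ℝ | 0 < l ∧ 2 * α / (α - 1) ≤ lMT / l} := by
  have hα₁ : 1 < α := by norm_num [hα]
  have hα₀ : 0 < α := by linarith
  have hf' : f = fun l => load α (lMT / l) :=
    funext fun l => by rw [hf, load, div_div, mul_comm l]
  have hh' : h = fun l => 1 - Real.exp (-detectionExponent a Υ α lMT l) :=
    funext fun l => by rw [hh, hf', detectionExponent]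
  have hW' : EqOn (fun l => lMT * loadRatio α (lMT / l) * detectionLogDeriv a Υ α lMT l) W₁
      (Ioi 0) := fun l hl => by
    rw [hW, ← logDeriv_apply, hh', logDeriv_detection hα₀ hMT.le hl, hf',
      (hasDerivAt_load_const_div hα₀ hMT.le hl).deriv, neg_load_div_deriv hα₀ hMT hl]
  have hP₀ : ∀ l ∈ Ioi (0 : ℝ), 0 ≤ lMT * loadRatio α (lMT / l) := fun l hl =>
    mul_nonneg hMT.le (loadRatio_nonneg hα₀ (div_nonneg hMT.le (le_of_lt hl)))
  have hQ₀ : ∀ l ∈ Ioi (0 : ℝ), 0 ≤ detectionLogDeriv a Υ α lMT l := fun _ hl =>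
    detectionLogDeriv_nonneg ha hΥ hα₀ hMT.le hl
  refine ⟨fun l hl _ => hW' hl ▸ mul_nonneg (hP₀ l hl) (hQ₀ l hl), ?_⟩
  exact ((antitoneOn_mul_loadRatio_const_div hα₁ hMT.le).mul_of_nonneg
    ((antitoneOn_detectionLogDeriv ha hΥ hα₀ hMT.le).mono fun _ hl => hl.1)
    (fun l hl => hP₀ l hl.1) fun l hl => hQ₀ l hl.1).congr (hW'.mono fun _ hl => hl.1)

/-- Appendix C of the paper: the first term
`W₁(λ) = −(f(λ)/f'(λ))·(h'(λ)/h(λ))` of the right-hand side of the stationary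
equation for energy-efficiency maximization in the density is nonnegative and
nonincreasing on `{λ > 0 : λ_MT/λ ≥ 2α/(α−1) = 2.8}`, where
`f(λ) = 1 − (1 + λ_MT/(α·λ))^(−α)`, `h(λ) = 1 − exp(−a·λ·(1 + Υ·f(λ)))`,
`α = 3.5`, `a > 0`, `Υ ≥ 0`. -/
theorem stationary_density_first_term_antitone (α β a Υ lMT : ℝ)
    (hα : α = 3.5) (hβ : 2 < β) (ha : 0 < a) (hΥ : 0 ≤ Υ) (hMT : 0 < lMT)
    (f h W₁ : ℝ → ℝ)
    (hf : ∀ l : ℝ, f l = 1 - (1 + lMT / (α * l)) ^ (-α))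
    (hh : ∀ l : ℝ, h l = 1 - Real.exp (-(a * l * (1 + Υ * f l))))
    (hW : ∀ l : ℝ, W₁ l = -(f l / deriv f l) * (deriv h l / h l)) :
    (∀ l : ℝ, 0 < l → 2 * α / (α - 1) ≤ lMT / l → 0 ≤ W₁ l) ∧
    AntitoneOn W₁ {l : ℝ | 0 < l ∧ 2 * α / (α - 1) ≤ lMT / l} :=
  stationary_density_first_term_antitone_general α a Υ lMT hα ha hΥ hMT f h W₁ hf hh hW
end

section
/- Let α = 3.5. Then L(t) = 1 − (1 + t/α)^(−α) ≤ t for every t ≥ 0. Consequently, for any λ > 0, λ_MT > 0, P_tx ≥ 0, P_circ ≥ 0 and P_idle ≥ 0, the network power consumption of Load Model 2, P_grid² = λ·P_tx·L(λ_MT/λ) + λ_MT·P_circ + λ·P_idle·(1 − L(λ_MT/λ)), is greater than or equal to that of Load Model 1, P_grid¹ = λ·(P_tx + P_circ)·L(λ_MT/λ) + λ·P_idle·(1 − L(λ_MT/λ)). -/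
/-!
Writing `(1 + t/α)^(-α) = exp (-α log (1 + t/α))`, the bounds `exp x ≥ 1 + x` and
`log (1 + s) ≤ s` give `(1 + t/α)^(-α) ≥ 1 - t`, i.e. `L(t) ≤ t`. Hence `λ L(λ_MT/λ) ≤ λ_MT`:
on average a cell holds at least as many terminals as active base stations, so paying the
circuit power per served terminal (Load Model 2) costs at least as much as paying it per
active base station (Load Model 1).
-/

open Real

theorem one_sub_le_one_add_div_rpow_neg {α t : ℝ} (hα : 0 < α) (ht : -α < t) :
    1 - t ≤ (1 + t / α) ^ (-α) := by
  have hbase : 0 < 1 + t / α := by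
    have : -1 < t / α := by rwa [lt_div_iff₀ hα, neg_one_mul]
    linarith
  have hlog : log (1 + t / α) ≤ t / α := by
    linarith [log_le_sub_one_of_pos hbase]
  calc 1 - t = 1 + -α * (t / α) := by field_simp; ring
    _ ≤ 1 + -α * log (1 + t / α) := by nlinarith
    _ ≤ exp (-α * log (1 + t / α)) := by linarith [add_one_le_exp (-α * log (1 + t / α))]
    _ = (1 + t / α) ^ (-α) := by rw [rpow_def_of_pos hbase, mul_comm]

theorem one_sub_one_add_div_rpow_neg_le {α t : ℝ} (hα : 0 < α) (ht : -α < t) :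
    1 - (1 + t / α) ^ (-α) ≤ t := by
  linarith [one_sub_le_one_add_div_rpow_neg hα ht]

theorem power_load_model_one_le_load_model_two {lam lMT Ptx Pcirc Pidle ℓ : ℝ} (hlam : 0 < lam)
    (hPcirc : 0 ≤ Pcirc) (hℓ : ℓ ≤ lMT / lam) :
    lam * (Ptx + Pcirc) * ℓ + lam * Pidle * (1 - ℓ) ≤
      lam * Ptx * ℓ + lMT * Pcirc + lam * Pidle * (1 - ℓ) := by
  have hactive : lam * ℓ ≤ lMT := (le_div_iff₀' hlam).1 hℓ
  nlinarith [mul_le_mul_of_nonneg_right hactive hPcirc]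

/-- Remark 11 of the paper: `L(t) = 1 − (1 + t/α)^(−α) ≤ t` for `t ≥ 0`
(`α = 3.5`); consequently the network power consumption of Load Model 2 is at
least that of Load Model 1 for the same transmit power, circuit power, idle
power, and densities of base stations and mobile terminals. -/
theorem load_model_power_consumption_comparison (α : ℝ) (hα : α = 3.5)
    (L : ℝ → ℝ) (hL : ∀ t : ℝ, L t = 1 - (1 + t / α) ^ (-α)) :
    (∀ t : ℝ, 0 ≤ t → L t ≤ t) ∧
    (∀ lam lMT Ptx Pcirc Pidle : ℝ,
      0 < lam → 0 < lMT → 0 ≤ Ptx → 0 ≤ Pcirc → 0 ≤ Pidle →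
      lam * (Ptx + Pcirc) * L (lMT / lam) + lam * Pidle * (1 - L (lMT / lam)) ≤
        lam * Ptx * L (lMT / lam) + lMT * Pcirc +
          lam * Pidle * (1 - L (lMT / lam))) := by
  have hα_pos : 0 < α := by norm_num [hα]
  have hL_le : ∀ t : ℝ, 0 ≤ t → L t ≤ t := fun t ht ↦
    hL t ▸ one_sub_one_add_div_rpow_neg_le hα_pos (by linarith)
  refine ⟨hL_le, fun lam lMT Ptx Pcirc Pidle hlam hlMT _ hPcirc _ ↦ ?_⟩
  exact power_load_model_one_le_load_model_two hlam hPcirc (hL_le _ (by positivity))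
end

section
/- Let α = 3.5, λ_MT > 0 and Υ ≥ 0, and let f(λ) = 1 − (1 + λ_MT/(α·λ))^(−α) for λ > 0. Then the function u(λ) = λ·(1 + Υ·f(λ)) is nondecreasing and concave on (0, ∞). In particular, f(λ) + λ·f'(λ) ≥ 0 and 2·f'(λ) + λ·f''(λ) ≤ 0 for every λ > 0. -/
open Real Filter Set Topology

/-- Key composition step in Lemma 6(v) of the paper: with
`f(λ) = 1 − (1 + λ_MT/(α·λ))^(−α)`, `α = 3.5`, `Υ ≥ 0`, the inner function
`u(λ) = λ·(1 + Υ·f(λ))` of the cell-detection factor is nondecreasing and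
concave on `(0, ∞)`; in particular `f(λ) + λ·f'(λ) ≥ 0` and
`2·f'(λ) + λ·f''(λ) ≤ 0` for every `λ > 0`. -/
theorem detection_inner_function_monotone_concave (α lMT Υ : ℝ)
    (hα : α = 3.5) (hMT : 0 < lMT) (hΥ : 0 ≤ Υ)
    (f u : ℝ → ℝ)
    (hf : ∀ l : ℝ, f l = 1 - (1 + lMT / (α * l)) ^ (-α))
    (hu : ∀ l : ℝ, u l = l * (1 + Υ * f l)) :
    MonotoneOn u (Ioi 0) ∧
    ConcaveOn ℝ (Ioi 0) u ∧
    (∀ l : ℝ, 0 < l →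
      0 ≤ f l + l * deriv f l ∧ 2 * deriv f l + l * deriv (deriv f) l ≤ 0) := by
  have hα0 : (0:ℝ) < α := by rw [hα]; norm_num
  have hα1 : (1:ℝ) ≤ α := by rw [hα]; norm_num
  set c : ℝ := lMT / α with hc
  have hc0 : 0 < c := div_pos hMT hα0
  have hf2 : f = fun x => 1 - (1 + c * x⁻¹) ^ (-α) := by
    funext l; rw [hf l, ← div_div, div_eq_mul_inv]
  have hu2 : u = fun x => x * (1 + Υ * f x) := funext hu
  set f₁ : ℝ → ℝ := fun y => -(α * c) * ((y ^ 2)⁻¹ * (1 + c * y⁻¹) ^ (-α - 1)) with hf₁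
  set f₂ : ℝ → ℝ := fun y => -(α * c) *
      (-(2 * y) / ((y ^ 2) ^ 2) * (1 + c * y⁻¹) ^ (-α - 1) +
        (y ^ 2)⁻¹ * ((-α - 1) * (1 + c * y⁻¹) ^ (-α - 1 - 1) * (c * -(y ^ 2)⁻¹))) with hf₂
  set u₁ : ℝ → ℝ := fun y => 1 + Υ * (f y + y * f₁ y) with hu₁
  set u₂ : ℝ → ℝ := fun y => Υ * (2 * f₁ y + y * f₂ y) with hu₂
  have hbpos : ∀ x : ℝ, 0 < x → 0 < 1 + c * x⁻¹ := by
    intro x hx; positivity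
  have hbD : ∀ x : ℝ, 0 < x → HasDerivAt (fun y => 1 + c * y⁻¹) (c * -(x ^ 2)⁻¹) x := by
    intro x hx
    exact ((hasDerivAt_inv hx.ne').const_mul c).const_add 1
  have hDf : ∀ x : ℝ, 0 < x → HasDerivAt f (f₁ x) x := by
    intro x hx
    have hg := (hbD x hx).rpow_const (p := -α) (Or.inl (hbpos x hx).ne')
    have := hg.const_sub 1
    rw [hf2]
    refine this.congr_deriv ?_
    simp only [hf₁]; ring
  have hDf1 : ∀ x : ℝ, 0 < x → HasDerivAt f₁ (f₂ x) x := by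
    intro x hx
    have h1 : HasDerivAt (fun y : ℝ => (y ^ 2)⁻¹) (-(2 * x) / (x ^ 2) ^ 2) x := by
      have := (hasDerivAt_pow 2 x).inv (by positivity)
      refine this.congr_deriv ?_
      push_cast; ring
    have h2 := (hbD x hx).rpow_const (p := -α - 1) (Or.inl (hbpos x hx).ne')
    have := (h1.mul h2).const_mul (-(α * c))
    refine this.congr_deriv ?_
    simp only [hf₂]; ring
  have hA : ∀ x : ℝ, 0 < x → 0 ≤ f x + x * f₁ x := by
    intro x hx
    have hb := hbpos x hx
    set s : ℝ := c * x⁻¹ with hs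
    have hs0 : 0 < s := by positivity
    have key : 1 + (α + 1) * s ≤ (1 + s) ^ (α + 1) :=
      one_add_mul_self_le_rpow_one_add (by linarith) (by linarith)
    set B : ℝ := (1 + s) ^ (-α - 1) with hB
    have hBnn : 0 ≤ B := rpow_nonneg (by linarith) _
    have hprod : B * (1 + s) ^ (α + 1) = 1 := by
      rw [hB, ← rpow_add hb]
      norm_num
    have hBb : (1 + s) ^ (-α) = B * (1 + s) := by
      rw [hB, ← rpow_add_one hb.ne']
      ring_nf
    have h5 : B * (1 + (α + 1) * s) ≤ 1 := by
      calc B * (1 + (α + 1) * s) ≤ B * (1 + s) ^ (α + 1) :=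
            mul_le_mul_of_nonneg_left key hBnn
        _ = 1 := hprod
    have hxx : x * (x ^ 2)⁻¹ = x⁻¹ := by
      field_simp
    rw [hf2]
    simp only [hf₁]
    have : f₁ x = -(α * c) * ((x ^ 2)⁻¹ * B) := rfl
    calc (0:ℝ) ≤ 1 - B * (1 + s) - α * s * B := by nlinarith
      _ = 1 - (1 + s) ^ (-α) + x * (-(α * c) * ((x ^ 2)⁻¹ * B)) := by
          rw [hBb, hs]
          field_simp
          ring
  have hBpart : ∀ x : ℝ, 0 < x → 2 * f₁ x + x * f₂ x ≤ 0 := by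
    intro x hx
    have hb := hbpos x hx
    have hident : 2 * f₁ x + x * f₂ x =
        -(α * (α + 1) * c ^ 2 * (x * ((x ^ 2) ^ 2)⁻¹) * (1 + c * x⁻¹) ^ (-α - 1 - 1)) := by
      simp only [hf₁, hf₂]
      field_simp
      ring
    rw [hident]
    have : 0 ≤ α * (α + 1) * c ^ 2 * (x * ((x ^ 2) ^ 2)⁻¹) * (1 + c * x⁻¹) ^ (-α - 1 - 1) := by
      positivity
    linarith
  have hDu : ∀ x : ℝ, 0 < x → HasDerivAt u (u₁ x) x := by
    intro x hx
    have := (hasDerivAt_id x).mul (((hDf x hx).const_mul Υ).const_add 1)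
    rw [hu2]
    refine this.congr_deriv ?_
    simp only [hu₁, id_eq]; ring
  have hDu1 : ∀ x : ℝ, 0 < x → HasDerivAt u₁ (u₂ x) x := by
    intro x hx
    have := (((hDf x hx).add ((hasDerivAt_id x).mul (hDf1 x hx))).const_mul Υ).const_add 1
    refine this.congr_deriv ?_
    simp only [hu₂, id_eq]; ring
  have hu₂nonpos : ∀ x : ℝ, 0 < x → u₂ x ≤ 0 := fun x hx =>
    mul_nonpos_of_nonneg_of_nonpos hΥ (hBpart x hx)
  have hu₁nonneg : ∀ x : ℝ, 0 < x → 0 ≤ u₁ x := by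
    intro x hx
    have := mul_nonneg hΥ (hA x hx)
    simp only [hu₁]; linarith
  have hcont : ContinuousOn u (Ioi 0) := fun x hx =>
    (hDu x hx).continuousAt.continuousWithinAt
  refine ⟨?_, ?_, ?_⟩
  · apply monotoneOn_of_deriv_nonneg (convex_Ioi 0) hcont
    · rw [interior_Ioi]
      exact fun x hx => (hDu x hx).differentiableAt.differentiableWithinAt
    · rw [interior_Ioi]
      intro x hx
      rw [(hDu x hx).deriv]
      exact hu₁nonneg x hx
  · apply concaveOn_of_hasDerivWithinAt2_nonpos (convex_Ioi 0) (f' := u₁) (f'' := u₂) hcont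
    · rw [interior_Ioi]
      exact fun x hx => (hDu x hx).hasDerivWithinAt
    · rw [interior_Ioi]
      exact fun x hx => (hDu1 x hx).hasDerivWithinAt
    · rw [interior_Ioi]
      exact fun x hx => hu₂nonpos x hx
  · intro l hl
    have hd1 : deriv f l = f₁ l := (hDf l hl).deriv
    have heq : deriv f =ᶠ[𝓝 l] f₁ := by
      filter_upwards [isOpen_Ioi.mem_nhds hl] with y hy
      exact (hDf y hy).deriv
    have hd2 : deriv (deriv f) l = f₂ l := by
      rw [heq.deriv_eq]
      exact (hDf1 l hl).deriv
    rw [hd1, hd2]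
    exact ⟨hA l hl, hBpart l hl⟩
end
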